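/- arXiv:2406.18377 — 10 statements merged into one kernel-verified Lean document; each statement's English description precedes it below -/
import Mathlib

section
/- Let H be a real Hilbert space, r > 0, and x̄ ∈ H with ‖x̄‖ > r. Then for every y ∈ H, D̂*P_{rB}(x̄)(y) = { (r/‖x̄‖)(y − (⟨x̄, y⟩/‖x̄‖²) x̄) }. -/
/-!
Outside the ball the projection is the radial map `u ↦ r ‖u‖⁻¹ u`, which is Fréchet
differentiable at `x̄` with the self-adjoint derivative `A = (r / ‖x̄‖) (I - x̄ ⊗ x̄ / ‖x̄‖²)`.
For any map `f` with derivative `A` at `x̄`, the quotient in the definition of `D̂*f(x̄)(y)` is,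
up to `o(1)`, the slope of the linear functional `⟪z - A* y, ·⟫`; its limsup is `≤ 0` exactly when
that functional vanishes, so `D̂*f(x̄)(y) = {A* y}`.
-/

open RealInnerProductSpace Filter Metric

/-- `P` is the metric projection (nearest-point map) onto `C`. -/
def IsMetricProj {H : Type*} [NormedAddCommGroup H] [InnerProductSpace ℝ H]
    (C : Set H) (P : H → H) : Prop :=
  ∀ x : H, P x ∈ C ∧ ∀ w ∈ C, ‖x - P x‖ ≤ ‖x - w‖

/-- The set `D̂*f(xb)(y)` characterized by the limsup inequality. -/
def coderivSet {H : Type*} [NormedAddCommGroup H] [InnerProductSpace ℝ H]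
    (f : H → H) (xb y : H) : Set H :=
  {z | ∀ ε > (0:ℝ), ∃ δ > (0:ℝ), ∀ u : H, u ≠ xb → ‖u - xb‖ < δ →
    (⟪z, u - xb⟫ - ⟪y, f u - f xb⟫) / ‖u - xb‖ < ε}

/-- The (Fréchet) regular normal cone via the limsup inequality. -/
def regNormalCone {E : Type*} [NormedAddCommGroup E] [InnerProductSpace ℝ E]
    (Ω : Set E) (w : E) : Set E :=
  {v | ∀ ε > (0:ℝ), ∃ δ > (0:ℝ), ∀ u ∈ Ω, u ≠ w → ‖u - w‖ < δ →
    ⟪v, u - w⟫ / ‖u - w‖ < ε}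

/-- The Bouligand (contingent) tangent cone. -/
def bouligandTangentCone {E : Type*} [NormedAddCommGroup E] [NormedSpace ℝ E]
    (Ω : Set E) (w : E) : Set E :=
  {z | ∃ t : ℕ → ℝ, ∃ s : ℕ → E, (∀ n, 0 < t n) ∧
    Tendsto t atTop (nhds 0) ∧ Tendsto s atTop (nhds z) ∧ ∀ n, w + t n • s n ∈ Ω}

section

variable {E : Type*} [NormedAddCommGroup E]

/-- The ε-δ form of `limsup_{u → x} g u / ‖u - x‖ ≤ 0`. -/
def LimsupSlopeNonpos (g : E → ℝ) (x : E) : Prop :=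
  ∀ ε > (0:ℝ), ∃ δ > (0:ℝ), ∀ u : E, u ≠ x → ‖u - x‖ < δ → g u / ‖u - x‖ < ε

variable [NormedSpace ℝ E] {g : E → ℝ} {ℓ : StrongDual ℝ E} {x : E}

theorem HasFDerivAt.apply_nonpos_of_limsupSlopeNonpos (hg : HasFDerivAt g ℓ x) (hgx : g x = 0)
    (hlim : LimsupSlopeNonpos g x) (v : E) : ℓ v ≤ 0 := by
  rcases eq_or_ne v 0 with rfl | hv
  · simp
  have hvpos : 0 < ‖v‖ := norm_pos_iff.2 hv
  have hline : HasDerivAt (fun t : ℝ => g (x + t • v)) (ℓ v) 0 := by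
    have hpath := ((hasDerivAt_id (0:ℝ)).smul_const v).const_add x
    rw [one_smul] at hpath
    exact hg.comp_hasDerivAt_of_eq 0 hpath (by simp)
  refine le_of_forall_pos_le_add fun ε hε => ?_
  obtain ⟨δ, hδ, hsmall⟩ := hlim (ε / ‖v‖) (by positivity)
  refine le_of_tendsto hline.tendsto_slope_zero_right ?_
  filter_upwards [Ioo_mem_nhdsGT (show (0:ℝ) < δ / ‖v‖ by positivity)] with t ⟨ht, htδ⟩
  have hnorm : ‖x + t • v - x‖ = t * ‖v‖ := by
    rw [add_sub_cancel_left, norm_smul, Real.norm_of_nonneg ht.le]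
  have hquot := hsmall (x + t • v) (by simpa using ⟨ht.ne', hv⟩)
    (by rw [hnorm]; exact (lt_div_iff₀ hvpos).1 htδ)
  rw [hnorm, div_lt_div_iff₀ (by positivity) hvpos] at hquot
  simp only [zero_add, zero_smul, add_zero, hgx, sub_zero, smul_eq_mul]
  rw [inv_mul_le_iff₀ ht]
  nlinarith

theorem HasFDerivAt.limsupSlopeNonpos_iff (hg : HasFDerivAt g ℓ x) (hgx : g x = 0) :
    LimsupSlopeNonpos g x ↔ ℓ = 0 := by
  constructor
  · intro hlim
    have hle := hg.apply_nonpos_of_limsupSlopeNonpos hgx hlim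
    ext v
    exact le_antisymm (hle v) (by simpa using hle (-v))
  · rintro rfl ε hε
    have hsmall := hg.isLittleO.def (half_pos hε)
    obtain ⟨δ, hδ, hball⟩ := Metric.eventually_nhds_iff.1 hsmall
    refine ⟨δ, hδ, fun u hu huδ => ?_⟩
    have hpos : 0 < ‖u - x‖ := norm_pos_iff.2 (sub_ne_zero.2 hu)
    have hgu := hball (show dist u x < δ by rwa [dist_eq_norm])
    simp only [hgx, sub_zero, zero_apply, Real.norm_eq_abs] at hgu
    rw [div_lt_iff₀ hpos]
    nlinarith [le_abs_self (g u)]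

end

section

variable {H : Type*} [NormedAddCommGroup H] [InnerProductSpace ℝ H]

theorem coderivSet_eq_singleton_of_hasFDerivAt {f : H → H} {A : H →L[ℝ] H} {x y w : H}
    (hf : HasFDerivAt f A x) (hw : ∀ v, ⟪y, A v⟫ = ⟪w, v⟫) : coderivSet f x y = {w} := by
  ext z
  have hg : HasFDerivAt (fun u => ⟪z, u - x⟫ - ⟪y, f u - f x⟫)
      (innerSL ℝ z - innerSL ℝ w) x := by
    have hA : (innerSL ℝ y).comp A = innerSL ℝ w := by
      ext v; simp [hw]
    rw [← hA]
    exact ((innerSL ℝ z).hasFDerivAt.comp x ((hasFDerivAt_id x).sub_const x)).sub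
      ((innerSL ℝ y).hasFDerivAt.comp x (hf.sub_const (f x)))
  change LimsupSlopeNonpos _ x ↔ _
  rw [hg.limsupSlopeNonpos_iff (by simp), sub_eq_zero, innerSL_inj, Set.mem_singleton_iff]

end

section

variable {E : Type*} [NormedAddCommGroup E] [InnerProductSpace ℝ E] {x : E}

theorem hasFDerivAt_norm (hx : x ≠ 0) : HasFDerivAt (‖·‖) (‖x‖⁻¹ • innerSL ℝ x) x := by
  have hsq := (hasStrictFDerivAt_norm_sq x).hasFDerivAt.sqrt (by simpa using hx)
  simp only [Real.sqrt_sq (norm_nonneg _)] at hsq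
  convert hsq using 1
  ext v
  simp only [smul_apply, coe_innerSL_apply, smul_eq_mul, one_div, mul_inv_rev, nsmul_eq_mul,
    Nat.cast_ofNat]
  field_simp

theorem hasFDerivAt_norm_inv_smul (hx : x ≠ 0) :
    HasFDerivAt (fun u : E => ‖u‖⁻¹ • u)
      (‖x‖⁻¹ • (ContinuousLinearMap.id ℝ E - (‖x‖ ^ 2)⁻¹ • (innerSL ℝ x).smulRight x)) x := by
  have hinv := (hasDerivAt_inv (norm_ne_zero_iff.2 hx)).comp_hasFDerivAt x (hasFDerivAt_norm hx)
  refine (hinv.smul (hasFDerivAt_id x)).congr_fderiv ?_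
  ext v
  simp only [Function.comp_apply, neg_smul, id_eq, add_apply, smul_apply,
    ContinuousLinearMap.id_apply, ContinuousLinearMap.smulRight_apply, neg_apply,
    coe_innerSL_apply, smul_eq_mul, sub_apply]
  module

end

section

variable {H : Type*} [NormedAddCommGroup H] [InnerProductSpace ℝ H] {r : ℝ} {P : H → H}

theorem IsMetricProj.radius_nonneg (hP : IsMetricProj (closedBall (0:H) r) P) : 0 ≤ r :=
  (norm_nonneg _).trans (mem_closedBall_zero_iff.1 (hP 0).1)

theorem IsMetricProj.closedBall_apply_of_lt_norm (hP : IsMetricProj (closedBall (0:H) r) P)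
    {u : H} (hu : r < ‖u‖) : P u = (r / ‖u‖) • u := by
  have hr : 0 ≤ r := hP.radius_nonneg
  have hu0 : 0 < ‖u‖ := hr.trans_lt hu
  obtain ⟨hPu, hmin⟩ := hP u
  rw [mem_closedBall_zero_iff] at hPu
  have hradial : ‖u - (r / ‖u‖) • u‖ = ‖u‖ - r := by
    have hc : r / ‖u‖ ≤ 1 := (div_le_one hu0).2 hu.le
    rw [show u - (r / ‖u‖) • u = (1 - r / ‖u‖) • u by rw [sub_smul, one_smul], norm_smul,
      Real.norm_of_nonneg (by linarith), sub_mul, one_mul, div_mul_cancel₀ _ hu0.ne']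
  have hdist := (hmin _ (by
    rw [mem_closedBall_zero_iff, norm_smul, Real.norm_of_nonneg (by positivity),
      div_mul_cancel₀ _ hu0.ne'])).trans_eq hradial
  have hPr : ‖P u‖ = r := by linarith [norm_sub_norm_le u (P u)]
  have hray : SameRay ℝ u (P u) := by
    have := sameRay_iff_norm_add.2 (show ‖(u - P u) + P u‖ = ‖u - P u‖ + ‖P u‖ by
      rw [sub_add_cancel]; linarith [norm_sub_norm_le u (P u)])
    simpa using this.add_left SameRay.rfl
  have hsmul := hray.norm_smul_eq
  rw [hPr] at hsmul
  rw [div_eq_inv_mul, mul_smul, ← hsmul, inv_smul_smul₀ hu0.ne']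

theorem IsMetricProj.closedBall_hasFDerivAt_of_lt_norm
    (hP : IsMetricProj (closedBall (0:H) r) P) {x : H} (hx : r < ‖x‖) :
    HasFDerivAt P
      ((r / ‖x‖) • (ContinuousLinearMap.id ℝ H - (‖x‖ ^ 2)⁻¹ • (innerSL ℝ x).smulRight x)) x := by
  have hx0 : x ≠ 0 := norm_pos_iff.1 (hP.radius_nonneg.trans_lt hx)
  have hradial := (hasFDerivAt_norm_inv_smul hx0).const_smul r
  rw [smul_smul, ← div_eq_mul_inv] at hradial
  refine hradial.congr_of_eventuallyEq ?_
  filter_upwards [(isOpen_lt continuous_const continuous_norm).mem_nhds hx] with u hu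
  rw [hP.closedBall_apply_of_lt_norm hu, Pi.smul_apply, div_eq_mul_inv, mul_smul]

end

variable {H : Type*} [NormedAddCommGroup H] [InnerProductSpace ℝ H] [CompleteSpace H]

theorem stmt5_general (r : ℝ) (xb : H) (hx : r < ‖xb‖) (P : H → H)
    (hP : IsMetricProj (closedBall (0:H) r) P) (y : H) :
    coderivSet P xb y = {(r / ‖xb‖) • (y - (⟪xb, y⟫ / ‖xb‖ ^ 2) • xb)} := by
  refine coderivSet_eq_singleton_of_hasFDerivAt (hP.closedBall_hasFDerivAt_of_lt_norm hx)
    fun v => ?_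
  simp only [FunLike.coe_smul, FunLike.coe_sub, Pi.smul_apply, Pi.sub_apply,
    ContinuousLinearMap.coe_id', id_eq, ContinuousLinearMap.smulRight_apply, innerSL_apply_apply,
    inner_sub_right, real_inner_smul_right, real_inner_comm]
  ring

theorem stmt5 (r : ℝ) (hr : 0 < r) (xb : H) (hx : r < ‖xb‖) (P : H → H)
    (hP : IsMetricProj (closedBall (0:H) r) P) (y : H) :
    coderivSet P xb y = {(r / ‖xb‖) • (y - (⟪xb, y⟫ / ‖xb‖ ^ 2) • xb)} :=
  stmt5_general r xb hx P hP y
end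

section
/- Let H be a real Hilbert space, r > 0, and x̄ ∈ H with ‖x̄‖ = r. Then for every y ∈ H, D̂*P_{rB}(x̄)(y) = { z ∈ H : ⟨y, x̄⟩ ≤ ⟨z, x̄⟩ ≤ 0 and y − z = (⟨y − z, x̄⟩/‖x̄‖²) x̄ }. -/
open RealInnerProductSpace Filter Metric

/-
Along a ray `xb + t • h`, `t ≥ 0`, the projection is differentiable from the right: for
`h = -xb` it is the identity, and for `⟪xb, h⟫ ≥ 0` it is the radial retraction
`u ↦ (r / ‖u‖) • u`, whose derivative at `xb` is the tangential part `h - (⟪xb, h⟫ / r²) • xb`.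
An element `z` of the regular coderivative satisfies `⟪z, h⟫ ≤ ⟪y, g⟫` for every such one-sided
derivative `g`; the directions `-xb`, `xb` and `±h` with `h ⊥ xb` give the three conditions.
Conversely, writing `y = z + c • xb` with `c ≤ 0`, the numerator of the defining quotient is
`⟪z, u - P u⟫ - c ⟪xb, P u - xb⟫`. The second term is `≤ 0` because `P u` lies in the ball, and
the first is `O(‖u - xb‖²)` because `u - P u` is a nonnegative multiple of `u` and `⟪z, xb⟫ ≤ 0`.
-/

open Set Topology

section

variable {H : Type*} [NormedAddCommGroup H] [InnerProductSpace ℝ H]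

theorem HasDerivAt.norm {f : ℝ → H} {f' : H} {t : ℝ} (hf : HasDerivAt f f' t) (h0 : f t ≠ 0) :
    HasDerivAt (‖f ·‖) (⟪f t, f'⟫ / ‖f t‖) t := by
  have hsqrt := hf.norm_sq.sqrt (by positivity)
  simp only [Real.sqrt_sq (norm_nonneg _)] at hsqrt
  convert hsqrt using 1
  field_simp

theorem eq_inner_div_smul_of_forall_inner_eq_zero {x v : H}
    (h : ∀ w, ⟪x, w⟫ = 0 → ⟪v, w⟫ = 0) : v = (⟪v, x⟫ / ‖x‖ ^ 2) • x := by
  have hv : v ∈ (ℝ ∙ x)ᗮᗮ := fun w hw =>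
    real_inner_comm v w ▸ h w (Submodule.mem_orthogonal_singleton_iff_inner_right.1 hw)
  rw [Submodule.orthogonal_orthogonal, ← Submodule.starProjection_eq_self_iff,
    Submodule.starProjection_singleton] at hv
  rw [real_inner_comm]
  simpa using hv.symm

theorem mem_coderivSet_of_le_mul_sq {f : H → H} {x y z : H} (C : ℝ)
    (h : ∀ u, ⟪z, u - x⟫ - ⟪y, f u - f x⟫ ≤ C * ‖u - x‖ ^ 2) : z ∈ coderivSet f x y := by
  intro ε hε
  refine ⟨ε / (|C| + 1), by positivity, fun u hu hδ => ?_⟩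
  have hd : 0 < ‖u - x‖ := norm_pos_iff.2 (sub_ne_zero.2 hu)
  rw [div_lt_iff₀ hd]
  calc ⟪z, u - x⟫ - ⟪y, f u - f x⟫ ≤ C * ‖u - x‖ ^ 2 := h u
    _ ≤ |C| * ‖u - x‖ * ‖u - x‖ := by rw [sq, ← mul_assoc]; gcongr; exact le_abs_self C
    _ < ε * ‖u - x‖ := by
      gcongr
      calc |C| * ‖u - x‖ ≤ (|C| + 1) * ‖u - x‖ := by gcongr; linarith
        _ < (|C| + 1) * (ε / (|C| + 1)) := by gcongr
        _ = ε := by field_simp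

theorem inner_le_of_mem_coderivSet {f : H → H} {x y z h g : H} (hz : z ∈ coderivSet f x y)
    (hh : h ≠ 0) (hf : HasDerivWithinAt (fun t : ℝ => f (x + t • h)) g (Ioi 0) 0) :
    ⟪z, h⟫ ≤ ⟪y, g⟫ := by
  have hh0 : 0 < ‖h‖ := norm_pos_iff.2 hh
  have hslope : Tendsto (fun t : ℝ => t⁻¹ • (f (x + t • h) - f x)) (𝓝[>] 0) (𝓝 g) := by
    refine ((hasDerivWithinAt_iff_tendsto_slope' (lt_irrefl 0)).1 hf).congr fun t => ?_
    simp [slope_def_module]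
  have hlim : Tendsto (fun t : ℝ => (⟪z, h⟫ - ⟪y, t⁻¹ • (f (x + t • h) - f x)⟫) / ‖h‖) (𝓝[>] 0)
      (𝓝 ((⟪z, h⟫ - ⟪y, g⟫) / ‖h‖)) :=
    ((tendsto_const_nhds.sub (tendsto_const_nhds.inner hslope)).div_const _)
  suffices (⟪z, h⟫ - ⟪y, g⟫) / ‖h‖ ≤ 0 by
    linarith [(div_le_iff₀ hh0).1 this]
  refine le_of_forall_pos_le_add fun ε hε => ?_
  obtain ⟨δ, hδ, hδz⟩ := hz ε hε
  rw [zero_add]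
  refine le_of_tendsto hlim ?_
  have hsmall : Ioo 0 (δ / ‖h‖) ∈ 𝓝[>] (0 : ℝ) := Ioo_mem_nhdsGT (by positivity)
  filter_upwards [hsmall] with t ⟨ht, htδ⟩
  have hne : x + t • h ≠ x := by simpa using And.intro ht.ne' hh
  have hnorm : ‖x + t • h - x‖ = t * ‖h‖ := by
    rw [add_sub_cancel_left, norm_smul, Real.norm_of_nonneg ht.le]
  have hquot := (hδz (x + t • h) hne (by rw [hnorm]; exact (lt_div_iff₀ hh0).1 htδ)).le
  rw [hnorm, add_sub_cancel_left, real_inner_smul_right] at hquot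
  rw [real_inner_smul_right]
  convert hquot using 1
  field_simp

namespace IsMetricProj

variable {C : Set H} {P : H → H}

theorem apply_eq_self (hP : IsMetricProj C P) {u : H} (hu : u ∈ C) : P u = u := by
  simpa [sub_eq_zero, eq_comm] using (hP u).2 u hu

theorem apply_eq_of_inner_le_zero (hP : IsMetricProj C P) {x q : H} (hq : q ∈ C)
    (h : ∀ w ∈ C, ⟪x - q, w - q⟫ ≤ 0) : P x = q := by
  have hmin : ‖x - P x‖ ^ 2 ≤ ‖x - q‖ ^ 2 := by
    gcongr
    exact (hP x).2 q hq
  have hexp : ‖x - P x‖ ^ 2 = ‖x - q‖ ^ 2 - 2 * ⟪x - q, P x - q⟫ + ‖P x - q‖ ^ 2 := by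
    rw [← norm_sub_sq_real, sub_sub_sub_cancel_right]
  have hsq : ‖P x - q‖ ^ 2 ≤ 0 := by linarith [h (P x) (hP x).1]
  exact sub_eq_zero.1 (norm_eq_zero.1 (by nlinarith [norm_nonneg (P x - q)]))

variable {r : ℝ}

theorem norm_apply_le (hP : IsMetricProj (closedBall 0 r) P) (u : H) : ‖P u‖ ≤ r :=
  mem_closedBall_zero_iff.1 (hP u).1

theorem apply_eq_div_norm_smul_of_le_norm (hP : IsMetricProj (closedBall 0 r) P) (hr : 0 < r)
    {u : H} (hu : r ≤ ‖u‖) : P u = (r / ‖u‖) • u := by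
  have hu0 : 0 < ‖u‖ := hr.trans_le hu
  have ha : r / ‖u‖ ≤ 1 := (div_le_one hu0).2 hu
  refine hP.apply_eq_of_inner_le_zero ?_ fun w hw => ?_
  · rw [mem_closedBall_zero_iff, norm_smul, Real.norm_of_nonneg (by positivity),
      div_mul_cancel₀ _ hu0.ne']
  · have hw : ⟪u, w⟫ ≤ ‖u‖ * r :=
      (real_inner_le_norm u w).trans (by gcongr; exact mem_closedBall_zero_iff.1 hw)
    have hscale : r / ‖u‖ * ‖u‖ ^ 2 = ‖u‖ * r := by field_simp
    calc ⟪u - (r / ‖u‖) • u, w - (r / ‖u‖) • u⟫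
        = (1 - r / ‖u‖) * (⟪u, w⟫ - r / ‖u‖ * ‖u‖ ^ 2) := by
          rw [show u - (r / ‖u‖) • u = (1 - r / ‖u‖) • u by rw [sub_smul, one_smul],
            real_inner_smul_left, inner_sub_right, real_inner_smul_right,
            real_inner_self_eq_norm_sq]
      _ ≤ 0 := mul_nonpos_of_nonneg_of_nonpos (by linarith) (by linarith)

theorem inner_apply_sub_le_zero (hP : IsMetricProj (closedBall 0 r) P) {x : H} (hx : ‖x‖ = r)
    (u : H) : ⟪x, P u - x⟫ ≤ 0 := by
  rw [inner_sub_right, real_inner_self_eq_norm_sq]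
  nlinarith [real_inner_le_norm x (P u), hP.norm_apply_le u, norm_nonneg x]

theorem inner_sub_apply_le (hP : IsMetricProj (closedBall 0 r) P) (hr : 0 < r) {x z : H}
    (hx : ‖x‖ = r) (hz : ⟪z, x⟫ ≤ 0) (u : H) : ⟪z, u - P u⟫ ≤ ‖z‖ / r * ‖u - x‖ ^ 2 := by
  rcases le_or_gt ‖u‖ r with hu | hu
  · rw [hP.apply_eq_self (mem_closedBall_zero_iff.2 hu), sub_self, inner_zero_right]
    positivity
  have hu0 : 0 < ‖u‖ := hr.trans hu
  have hgap : ‖u‖ - r ≤ ‖u - x‖ := hx ▸ norm_sub_norm_le u x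
  have hzu : ⟪z, u⟫ ≤ ‖z‖ * ‖u - x‖ := by
    have := real_inner_le_norm z (u - x)
    rw [inner_sub_right] at this
    linarith
  have hcoef : 1 - r / ‖u‖ ≤ ‖u - x‖ / r := by
    rw [one_sub_div hu0.ne', div_le_div_iff₀ hu0 hr]
    nlinarith
  rw [hP.apply_eq_div_norm_smul_of_le_norm hr hu.le,
    show u - (r / ‖u‖) • u = (1 - r / ‖u‖) • u by rw [sub_smul, one_smul], real_inner_smul_right]
  calc (1 - r / ‖u‖) * ⟪z, u⟫ ≤ (1 - r / ‖u‖) * (‖z‖ * ‖u - x‖) := by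
        gcongr
        rw [sub_nonneg, div_le_one hu0]; exact hu.le
    _ ≤ ‖u - x‖ / r * (‖z‖ * ‖u - x‖) := by gcongr
    _ = ‖z‖ / r * ‖u - x‖ ^ 2 := by ring

theorem mem_coderivSet_closedBall (hP : IsMetricProj (closedBall 0 r) P) (hr : 0 < r)
    {x y z : H} (hx : ‖x‖ = r) (hz : ⟪z, x⟫ ≤ 0) {c : ℝ} (hc : c ≤ 0) (hy : y = z + c • x) :
    z ∈ coderivSet P x y := by
  refine mem_coderivSet_of_le_mul_sq (‖z‖ / r) fun u => ?_
  calc ⟪z, u - x⟫ - ⟪y, P u - P x⟫ = ⟪z, u - P u⟫ + -c * ⟪x, P u - x⟫ := by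
        rw [hP.apply_eq_self (mem_closedBall_zero_iff.2 hx.le), hy, inner_add_left,
          real_inner_smul_left, inner_sub_right z u, inner_sub_right z (P u),
          inner_sub_right z u]
        ring
    _ ≤ ‖z‖ / r * ‖u - x‖ ^ 2 := by
        linarith [hP.inner_sub_apply_le hr hx hz u,
          mul_nonpos_of_nonneg_of_nonpos (neg_nonneg.2 hc) (hP.inner_apply_sub_le_zero hx u)]

theorem hasDerivWithinAt_closedBall_inward (hP : IsMetricProj (closedBall 0 r) P) {x : H}
    (hx : ‖x‖ ≤ r) : HasDerivWithinAt (fun t : ℝ => P (x + t • -x)) (-x) (Ioi 0) 0 := by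
  have hline : HasDerivWithinAt (fun t : ℝ => x + t • -x) (-x) (Ioi 0) 0 :=
    (((hasDerivAt_id 0).smul_const (-x)).const_add x).hasDerivWithinAt.congr_deriv
      (one_smul ℝ _)
  refine hline.congr_of_eventuallyEq ?_ (by simp [hP.apply_eq_self (mem_closedBall_zero_iff.2 hx)])
  filter_upwards [Ioo_mem_nhdsGT one_pos] with t ⟨ht0, ht1⟩
  refine hP.apply_eq_self (mem_closedBall_zero_iff.2 ?_)
  rw [show x + t • -x = (1 - t) • x by rw [sub_smul, one_smul, smul_neg, sub_eq_add_neg],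
    norm_smul, Real.norm_of_nonneg (by linarith)]
  nlinarith [norm_nonneg x]

theorem hasDerivWithinAt_closedBall_outward (hP : IsMetricProj (closedBall 0 r) P) (hr : 0 < r)
    {x h : H} (hx : ‖x‖ = r) (hh : 0 ≤ ⟪x, h⟫) :
    HasDerivWithinAt (fun t : ℝ => P (x + t • h)) (h - (⟪x, h⟫ / r ^ 2) • x) (Ioi 0) 0 := by
  have hx0 : x ≠ 0 := norm_ne_zero_iff.1 (hx ▸ hr.ne')
  have hline : HasDerivAt (fun t : ℝ => x + t • h) h 0 :=
    ((hasDerivAt_id 0).smul_const h).const_add x |>.congr_deriv (one_smul ℝ _)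
  have hnorm := hline.norm (by simpa using hx0)
  have hscale := (hasDerivAt_const (0 : ℝ) r).div hnorm (by simpa using hx0)
  have hradial : HasDerivAt (fun t : ℝ => (r / ‖x + t • h‖) • (x + t • h))
      (h - (⟪x, h⟫ / r ^ 2) • x) 0 := by
    refine (hscale.smul hline).congr_deriv ?_
    simp only [Pi.div_apply, zero_smul, add_zero, hx, zero_mul, zero_sub, div_self hr.ne',
      one_smul, mul_div_cancel₀ _ hr.ne', neg_div, neg_smul, ← sub_eq_add_neg]
  refine hradial.hasDerivWithinAt.congr_of_eventuallyEq ?_ ?_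
  · filter_upwards [self_mem_nhdsWithin] with t (ht : 0 < t)
    refine hP.apply_eq_div_norm_smul_of_le_norm hr ?_
    have hsq : r ^ 2 ≤ ‖x + t • h‖ ^ 2 := by
      rw [norm_add_sq_real, norm_smul, real_inner_smul_right, hx]
      nlinarith [norm_nonneg h]
    nlinarith [norm_nonneg (x + t • h)]
  · simp [hP.apply_eq_self (mem_closedBall_zero_iff.2 hx.le), hx, hr.ne']

end IsMetricProj

end

variable {H : Type*} [NormedAddCommGroup H] [InnerProductSpace ℝ H] [CompleteSpace H]

theorem stmt6 (r : ℝ) (hr : 0 < r) (xb : H) (hx : ‖xb‖ = r) (P : H → H)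
    (hP : IsMetricProj (closedBall (0:H) r) P) (y : H) :
    coderivSet P xb y =
      {z : H | ⟪y, xb⟫ ≤ ⟪z, xb⟫ ∧ ⟪z, xb⟫ ≤ 0 ∧
        y - z = (⟪y - z, xb⟫ / ‖xb‖ ^ 2) • xb} := by
  have hxb : xb ≠ 0 := norm_ne_zero_iff.1 (hx ▸ hr.ne')
  ext z
  constructor
  · intro hz
    have tangent (h : H) (hh : ⟪xb, h⟫ = 0) : ⟪z, h⟫ ≤ ⟪y, h⟫ := by
      rcases eq_or_ne h 0 with rfl | hh0
      · simp
      simpa [hh] using inner_le_of_mem_coderivSet hz hh0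
        (hP.hasDerivWithinAt_closedBall_outward hr hx hh.ge)
    refine ⟨?_, ?_, eq_inner_div_smul_of_forall_inner_eq_zero fun h hh => ?_⟩
    · simpa using inner_le_of_mem_coderivSet hz (neg_ne_zero.2 hxb)
        (hP.hasDerivWithinAt_closedBall_inward hx.le)
    · simpa [hx, hr.ne'] using inner_le_of_mem_coderivSet hz hxb
        (hP.hasDerivWithinAt_closedBall_outward hr hx real_inner_self_nonneg)
    · have hneg := tangent (-h) (by simp [hh])
      rw [inner_neg_right, inner_neg_right] at hneg
      rw [inner_sub_left]
      linarith [tangent h hh]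
  · rintro ⟨hyz, hz, hdecomp⟩
    refine hP.mem_coderivSet_closedBall hr hx hz ?_ (by rw [← hdecomp]; abel)
    exact div_nonpos_of_nonpos_of_nonneg (by rw [inner_sub_left]; linarith) (by positivity)
end

section
/- Let H be a real Hilbert space, r > 0, and x̄ ∈ H with ‖x̄‖ = r. If z ∈ D̂*P_{rB}(x̄)(y), then the orthogonal components of y and z with respect to x̄ coincide, i.e. y − (⟨x̄,y⟩/‖x̄‖²)x̄ = z − (⟨x̄,z⟩/‖x̄‖²)x̄. -/
open RealInnerProductSpace Filter Metric

variable {H : Type*} [NormedAddCommGroup H] [InnerProductSpace ℝ H] [CompleteSpace H]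

/-!
Along a direction `v` orthogonal to `x̄`, the ray `x̄ + t • v` leaves the ball only to second
order: by Pythagoras `‖x̄ + t • v‖ - r ≤ t ^ 2 ‖v‖ ^ 2 / r`, and this bounds the distance from
`x̄ + t • v` to its projection. So `P` has directional derivative `v` at `x̄` in every direction
`v ⊥ x̄`, and testing the limsup inequality along the rays `x̄ ± t • v` gives `⟪z, v⟫ = ⟪y, v⟫`
for all `v ⊥ x̄`; that is, `y - z` is a multiple of `x̄`.
-/

open Topology

section

variable {E : Type*} [NormedAddCommGroup E] [InnerProductSpace ℝ E]

theorem IsMetricProj.apply_eq_self_s9 {C : Set E} {P : E → E} (hP : IsMetricProj C P) {x : E}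
    (hx : x ∈ C) : P x = x := by
  simpa [sub_eq_zero, eq_comm] using (hP x).2 x hx

theorem IsMetricProj.norm_sub_apply_le_closedBall {r : ℝ} {P : E → E}
    (hP : IsMetricProj (closedBall 0 r) P) (hr : 0 ≤ r) {u : E} (hu : r ≤ ‖u‖) :
    ‖u - P u‖ ≤ ‖u‖ - r := by
  rcases eq_or_ne u 0 with rfl | hu₀
  · have : r = 0 := by rw [norm_zero] at hu; linarith
    simpa [this] using (hP 0).2 0 (by simp [this])
  have hu' : 0 < ‖u‖ := norm_pos_iff.mpr hu₀
  have hmem : (r / ‖u‖) • u ∈ closedBall (0 : E) r := by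
    rw [mem_closedBall_zero_iff, norm_smul, Real.norm_of_nonneg (by positivity),
      div_mul_cancel₀ _ hu'.ne']
  calc ‖u - P u‖ ≤ ‖u - (r / ‖u‖) • u‖ := (hP u).2 _ hmem
    _ = ‖(1 - r / ‖u‖) • u‖ := by rw [sub_smul, one_smul]
    _ = ‖u‖ - r := by
      rw [norm_smul, Real.norm_of_nonneg (by rw [sub_nonneg, div_le_one hu']; exact hu)]
      field_simp

theorem norm_add_sub_norm_le_of_inner_eq_zero {x v : E} (hx : x ≠ 0) (hv : ⟪x, v⟫ = 0) :
    ‖x + v‖ - ‖x‖ ≤ ‖v‖ ^ 2 / ‖x‖ := by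
  have hx' : 0 < ‖x‖ := norm_pos_iff.mpr hx
  have hpyth := norm_add_sq_eq_norm_sq_add_norm_sq_real hv
  rw [le_div_iff₀ hx']
  nlinarith [norm_nonneg (x + v)]

theorem IsMetricProj.tendsto_closedBall_of_inner_eq_zero {P : E → E} {x v : E}
    (hP : IsMetricProj (closedBall 0 ‖x‖) P) (hx : x ≠ 0) (hv : ⟪x, v⟫ = 0) :
    Tendsto (fun t : ℝ => t⁻¹ • (P (x + t • v) - P x)) (𝓝[>] 0) (𝓝 v) := by
  have hx' : 0 < ‖x‖ := norm_pos_iff.mpr hx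
  have hPx : P x = x := hP.apply_eq_self_s9 (by simp)
  have hbound : ∀ t : ℝ, 0 < t →
      ‖t⁻¹ • (P (x + t • v) - P x) - v‖ ≤ t * (‖v‖ ^ 2 / ‖x‖) := by
    intro t ht
    have htv : ⟪x, t • v⟫ = 0 := by rw [inner_smul_right, hv, mul_zero]
    have hle : ‖x‖ ≤ ‖x + t • v‖ := by
      have := norm_add_sq_eq_norm_sq_add_norm_sq_real htv
      nlinarith [norm_nonneg (x + t • v), norm_nonneg (t • v)]
    have hdist := (hP.norm_sub_apply_le_closedBall (norm_nonneg x) hle).trans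
      (norm_add_sub_norm_le_of_inner_eq_zero hx htv)
    have : t⁻¹ • (P (x + t • v) - P x) - v = t⁻¹ • -(x + t • v - P (x + t • v)) := by
      rw [hPx, smul_neg, smul_sub, smul_sub, smul_add, inv_smul_smul₀ ht.ne']; abel
    rw [norm_smul, Real.norm_of_nonneg ht.le] at hdist
    rw [this, norm_smul, norm_neg, Real.norm_of_nonneg (inv_nonneg.mpr ht.le)]
    calc t⁻¹ * ‖x + t • v - P (x + t • v)‖ ≤ t⁻¹ * ((t * ‖v‖) ^ 2 / ‖x‖) := by gcongr
      _ = t * (‖v‖ ^ 2 / ‖x‖) := by field_simp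
  rw [tendsto_iff_norm_sub_tendsto_zero]
  refine squeeze_zero' (Eventually.of_forall fun _ => norm_nonneg _)
    (eventually_nhdsWithin_of_forall hbound) ?_
  simpa using tendsto_nhdsWithin_of_tendsto_nhds
    ((continuous_mul_const (‖v‖ ^ 2 / ‖x‖)).tendsto' 0 0 (zero_mul _))

theorem inner_le_inner_of_mem_coderivSet {f : E → E} {x y z v w : E}
    (hz : z ∈ coderivSet f x y)
    (hf : Tendsto (fun t : ℝ => t⁻¹ • (f (x + t • v) - f x)) (𝓝[>] 0) (𝓝 w)) :
    ⟪z, v⟫ ≤ ⟪y, w⟫ := by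
  have hle : ∀ ε > (0 : ℝ), ⟪z, v⟫ - ⟪y, w⟫ ≤ ε * ‖v‖ := by
    intro ε hε
    obtain ⟨δ, hδ, hd⟩ := hz ε hε
    have hsmall : ∀ᶠ t in 𝓝[>] (0 : ℝ), t * ‖v‖ < δ := by
      refine tendsto_nhdsWithin_of_tendsto_nhds ?_ |>.eventually (gt_mem_nhds hδ)
      exact (continuous_mul_const ‖v‖).tendsto' 0 0 (zero_mul _)
    refine le_of_tendsto (tendsto_const_nhds.sub (tendsto_const_nhds.inner hf)) ?_
    filter_upwards [self_mem_nhdsWithin, hsmall] with t (ht : 0 < t) htδ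
    rcases eq_or_ne v 0 with rfl | hv
    · simp
    have hnorm : ‖x + t • v - x‖ = t * ‖v‖ := by
      rw [add_sub_cancel_left, norm_smul, Real.norm_of_nonneg ht.le]
    have h := hd (x + t • v) (by simp [ht.ne', hv]) (hnorm ▸ htδ)
    rw [hnorm, div_lt_iff₀ (by positivity), add_sub_cancel_left, inner_smul_right] at h
    rw [inner_smul_right, ← mul_le_mul_iff_of_pos_left ht, mul_sub, ← mul_assoc,
      mul_inv_cancel₀ ht.ne', one_mul]
    linarith
  have hlim : Tendsto (fun ε : ℝ => ε * ‖v‖) (𝓝[>] 0) (𝓝 0) :=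
    tendsto_nhdsWithin_of_tendsto_nhds ((continuous_mul_const ‖v‖).tendsto' 0 0 (zero_mul _))
  exact sub_nonpos.mp (ge_of_tendsto hlim (eventually_nhdsWithin_of_forall hle))

theorem sub_smul_eq_sub_smul_of_forall_inner_eq {x y z : E}
    (h : ∀ v, ⟪x, v⟫ = 0 → ⟪y, v⟫ = ⟪z, v⟫) :
    y - (⟪x, y⟫ / ‖x‖ ^ 2) • x = z - (⟪x, z⟫ / ‖x‖ ^ 2) • x := by
  set d := y - (⟪x, y⟫ / ‖x‖ ^ 2) • x - (z - (⟪x, z⟫ / ‖x‖ ^ 2) • x)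
  have hxd : ⟪x, d⟫ = 0 := by
    rcases eq_or_ne x 0 with rfl | hx
    · simp
    simp only [d, inner_sub_right, real_inner_smul_right, real_inner_self_eq_norm_sq]
    field_simp
    ring
  have hd : d = y - z - ((⟪x, y⟫ - ⟪x, z⟫) / ‖x‖ ^ 2) • x := by
    simp only [d]
    module
  have hdd : ⟪d, d⟫ = 0 := by
    nth_rewrite 1 [hd]
    rw [inner_sub_left, inner_sub_left, real_inner_smul_left, h d hxd, real_inner_comm, hxd]
    ring
  rw [← sub_eq_zero]
  exact inner_self_eq_zero.mp hdd

end

set_option linter.unusedSectionVars false in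
theorem stmt9 (r : ℝ) (hr : 0 < r) (xb : H) (hx : ‖xb‖ = r) (P : H → H)
    (hP : IsMetricProj (closedBall (0:H) r) P) (y z : H)
    (hz : z ∈ coderivSet P xb y) :
    y - (⟪xb, y⟫ / ‖xb‖ ^ 2) • xb = z - (⟪xb, z⟫ / ‖xb‖ ^ 2) • xb := by
  subst hx
  have hxb : xb ≠ 0 := norm_pos_iff.mp hr
  refine (sub_smul_eq_sub_smul_of_forall_inner_eq fun v hv => ?_).symm
  have hv' : ⟪xb, -v⟫ = 0 := by rw [inner_neg_right, hv, neg_zero]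
  have h₁ := inner_le_inner_of_mem_coderivSet hz (hP.tendsto_closedBall_of_inner_eq_zero hxb hv)
  have h₂ := inner_le_inner_of_mem_coderivSet hz (hP.tendsto_closedBall_of_inner_eq_zero hxb hv')
  rw [inner_neg_right, inner_neg_right] at h₂
  linarith
end

section
/- Let H be a real Hilbert space, r > 0, and x̄ ∈ H with ‖x̄‖ = r. Then D̂*P_{rB}(x̄)(0) = {0}. -/
open RealInnerProductSpace Filter Metric

variable {H : Type*} [NormedAddCommGroup H] [InnerProductSpace ℝ H] [CompleteSpace H]

theorem stmt10 (r : ℝ) (hr : 0 < r) (xb : H) (hx : ‖xb‖ = r) (P : H → H)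
    (hP : IsMetricProj (closedBall (0:H) r) P) :
    coderivSet P xb 0 = {0} := by
  ext z
  simp only [Set.mem_singleton_iff, coderivSet, Set.mem_setOf_eq]
  constructor
  · intro h
    by_contra hz
    have hzn : (0:ℝ) < ‖z‖ := norm_pos_iff.mpr hz
    obtain ⟨δ, hδ, hδ'⟩ := h ‖z‖ hzn
    set c : ℝ := δ / (2 * ‖z‖) with hc
    have hcpos : 0 < c := by positivity
    have key := hδ' (xb + c • z) ?_ ?_
    · have h1 : xb + c • z - xb = c • z := by abel
      rw [h1] at key
      simp only [inner_zero_left, sub_zero, real_inner_smul_right, norm_smul,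
        Real.norm_eq_abs, abs_of_pos hcpos, real_inner_self_eq_norm_sq] at key
      have : c * ‖z‖ ^ 2 / (c * ‖z‖) = ‖z‖ := by
        field_simp
      rw [this] at key
      exact lt_irrefl _ key
    · intro hcon
      apply hz
      have : c • z = 0 := by
        have := congrArg (· - xb) hcon
        simpa using this
      simpa [smul_eq_zero, hcpos.ne'] using this
    · have h1 : xb + c • z - xb = c • z := by abel
      rw [h1, norm_smul, Real.norm_eq_abs, abs_of_pos hcpos, hc]
      rw [div_mul_eq_mul_div, mul_comm]
      calc ‖z‖ * δ / (2 * ‖z‖) = δ / 2 := by field_simp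
        _ < δ := by linarith
  · rintro rfl
    intro ε hε
    exact ⟨1, one_pos, fun u _ _ => by
      simp only [inner_zero_left, sub_zero, zero_div]; exact hε⟩
end

section
/- Let H be a real Hilbert space, r > 0, and x̄ ∈ H with ‖x̄‖ = r. Then D̂*P_{rB}(x̄)(x̄) = ∅. -/
open RealInnerProductSpace Filter Metric

variable {H : Type*} [NormedAddCommGroup H] [InnerProductSpace ℝ H] [CompleteSpace H]

theorem stmt12 (r : ℝ) (hr : 0 < r) (xb : H) (hx : ‖xb‖ = r) (P : H → H)
    (hP : IsMetricProj (closedBall (0:H) r) P) :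
    coderivSet P xb xb = ∅ := by
  have hxb0 : xb ≠ 0 := by
    intro h; rw [h, norm_zero] at hx; linarith
  have hmem : xb ∈ closedBall (0:H) r := by
    simp [mem_closedBall, dist_eq_norm, hx]
  have hPxb : P xb = xb := by
    obtain ⟨_, h2⟩ := hP xb
    have h3 : ‖xb - P xb‖ ≤ 0 := by simpa using h2 xb hmem
    have := norm_le_zero_iff.mp h3
    rw [sub_eq_zero] at this
    exact this.symm
  -- projection fixes points of the ball
  have hPid : ∀ u ∈ closedBall (0:H) r, P u = u := by
    intro u hu
    obtain ⟨_, h2⟩ := hP u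
    have h3 : ‖u - P u‖ ≤ 0 := by simpa using h2 u hu
    have := norm_le_zero_iff.mp h3
    rw [sub_eq_zero] at this
    exact this.symm
  -- projection of outward points
  have hPout : ∀ t : ℝ, 0 < t → P ((1 + t) • xb) = xb := by
    intro t ht
    set u := (1 + t) • xb with hu
    obtain ⟨h1, h2⟩ := hP u
    have hnu : ‖u‖ = (1 + t) * r := by
      rw [hu, norm_smul, Real.norm_eq_abs, abs_of_pos (by linarith), hx]
    have hnPu : ‖P u‖ ≤ r := by simpa [mem_closedBall, dist_eq_norm] using h1
    have hux : ‖u - xb‖ = t * r := by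
      have : u - xb = t • xb := by rw [hu]; module
      rw [this, norm_smul, Real.norm_eq_abs, abs_of_pos ht, hx]
    have hle : ‖u - P u‖ ≤ t * r := by
      have := h2 xb hmem; rwa [hux] at this
    have hge : t * r ≤ ‖u - P u‖ := by
      have h4 : ‖u‖ - ‖P u‖ ≤ ‖u - P u‖ := norm_sub_norm_le u (P u)
      nlinarith [hnu, hnPu]
    have heq : ‖u - P u‖ = t * r := le_antisymm hle hge
    have hnPu' : ‖P u‖ = r := by
      have h4 : ‖u‖ - ‖u - P u‖ ≤ ‖P u‖ := by
        have := norm_sub_norm_le u (u - P u)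
        simpa using this
      rw [hnu, heq] at h4
      nlinarith
    have hinner : ⟪xb, P u⟫ = r ^ 2 := by
      have hexp : ‖u - P u‖ ^ 2 = ‖u‖ ^ 2 - 2 * ⟪u, P u⟫ + ‖P u‖ ^ 2 := by
        have := @norm_sub_sq_real H _ _ u (P u); nlinarith [this]
      rw [heq, hnu, hnPu'] at hexp
      have hiu : ⟪u, P u⟫ = (1 + t) * ⟪xb, P u⟫ := by
        rw [hu, real_inner_smul_left]
      rw [hiu] at hexp
      nlinarith
    have hz : ‖P u - xb‖ ^ 2 = 0 := by
      rw [@norm_sub_sq_real, real_inner_comm, hinner, hnPu', hx]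
      ring
    have : P u - xb = 0 := by
      have := pow_eq_zero_iff (n := 2) (by norm_num) |>.mp hz
      exact norm_eq_zero.mp this
    exact sub_eq_zero.mp this
  -- main argument
  ext z
  simp only [Set.mem_empty_iff_false, iff_false]
  intro hz
  rw [coderivSet, Set.mem_setOf_eq] at hz
  obtain ⟨δ, hδ, hδ2⟩ := hz (r / 2) (by linarith)
  set t : ℝ := min (δ / (2 * r)) (1 / 2) with ht
  have ht0 : 0 < t := lt_min (by positivity) (by norm_num)
  have ht1 : t ≤ 1 / 2 := min_le_right _ _
  have htd : t * r < δ := by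
    have h1 : t ≤ δ / (2 * r) := min_le_left _ _
    have : t * r ≤ δ / 2 := by
      calc t * r ≤ δ / (2 * r) * r := by nlinarith
        _ = δ / 2 := by field_simp
    linarith
  set c : ℝ := ⟪z, xb⟫ with hc
  -- inward point
  have e1 : (1 - t) • xb - xb = (-t) • xb := by module
  have n1 : ‖(1 - t) • xb - xb‖ = t * r := by
    rw [e1, norm_smul, Real.norm_eq_abs, abs_neg, abs_of_pos ht0, hx]
  have hu1mem : (1 - t) • xb ∈ closedBall (0:H) r := by
    simp only [mem_closedBall, dist_eq_norm, sub_zero, norm_smul, Real.norm_eq_abs, hx]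
    rw [abs_of_pos (by linarith)]
    nlinarith
  have hne1 : (1 - t) • xb ≠ xb := by
    intro h
    have : (1 - t) • xb - xb = 0 := by rw [h]; abel
    rw [e1] at this
    rcases smul_eq_zero.mp this with h' | h'
    · simp only [neg_eq_zero] at h'; linarith
    · exact hxb0 h'
  have H1 := hδ2 ((1 - t) • xb) hne1 (by rw [n1]; exact htd)
  have n1' : ‖(-t) • xb‖ = t * r := by rw [← e1]; exact n1
  rw [hPid _ hu1mem, hPxb, e1, n1', real_inner_smul_right, real_inner_smul_right,
    real_inner_self_eq_norm_sq, hx] at H1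
  rw [div_lt_iff₀ (by positivity)] at H1
  -- H1 : -t * c - (-t * r^2) < r/2 * (t * r)
  -- outward point
  have e2 : (1 + t) • xb - xb = t • xb := by module
  have n2 : ‖(1 + t) • xb - xb‖ = t * r := by
    rw [e2, norm_smul, Real.norm_eq_abs, abs_of_pos ht0, hx]
  have hne2 : (1 + t) • xb ≠ xb := by
    intro h
    have : (1 + t) • xb - xb = 0 := by rw [h]; abel
    rw [e2] at this
    rcases smul_eq_zero.mp this with h' | h'
    · linarith
    · exact hxb0 h'
  have H2 := hδ2 ((1 + t) • xb) hne2 (by rw [n2]; exact htd)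
  have n2' : ‖t • xb‖ = t * r := by rw [← e2]; exact n2
  rw [hPout t ht0, hPxb, e2, n2', real_inner_smul_right, sub_self, inner_zero_right] at H2
  rw [div_lt_iff₀ (by positivity)] at H2
  -- H2 : t * c - 0 < r/2 * (t * r)
  nlinarith [H1, H2]
end

section
/- Let H be a real Hilbert space, c ∈ H, r > 0, and x̄ ∈ H with ‖x̄ − c‖ = r. Then D̂*P_{B(c,r)}(x̄)(y) = { z ∈ H : ⟨y, x̄ − c⟩ ≤ ⟨z, x̄ − c⟩ ≤ 0 and y − z = (⟨y − z, x̄ − c⟩/‖x̄ − c‖²)(x̄ − c) } for every y ∈ H. -/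
open RealInnerProductSpace Filter Metric

variable {H : Type*} [NormedAddCommGroup H] [InnerProductSpace ℝ H] [CompleteSpace H]

lemma proj_unique' {H : Type*} [NormedAddCommGroup H] [InnerProductSpace ℝ H]
    {C : Set H} (hC : Convex ℝ C) {P : H → H} (hP : IsMetricProj C P)
    (u v : H) (hv : v ∈ C) (hmin : ∀ w ∈ C, ‖u - v‖ ≤ ‖u - w‖) : P u = v := by
  obtain ⟨hPu, hPmin⟩ := hP u
  have h1 : ‖u - P u‖ = ‖u - v‖ := le_antisymm (hPmin v hv) (hmin _ hPu)
  have hm : (1/2 : ℝ) • P u + (1/2 : ℝ) • v ∈ C :=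
    hC hPu hv (by norm_num) (by norm_num) (by norm_num)
  have h2 : ‖u - v‖ ≤ ‖u - ((1/2:ℝ) • P u + (1/2:ℝ) • v)‖ := hmin _ hm
  have hmid : u - ((1/2:ℝ) • P u + (1/2:ℝ) • v)
      = (1/2:ℝ) • ((u - P u) + (u - v)) := by module
  rw [hmid, norm_smul] at h2
  have h4 : 2 * ‖u - v‖ ≤ ‖(u - P u) + (u - v)‖ := by
    rw [norm_div] at h2 <;> simp at h2 <;> linarith
  have h5 : (2*‖u - v‖)^2 ≤ ‖(u - P u) + (u - v)‖^2 := by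
    apply pow_le_pow_left₀ (by positivity) h4
  rw [norm_add_sq_real] at h5
  have h1sq : ‖u - P u‖^2 = ‖u - v‖^2 := by rw [h1]
  have h6 : ‖(u - P u) - (u - v)‖^2 ≤ 0 := by
    rw [norm_sub_sq_real]; nlinarith
  have h7 : (u - P u) - (u - v) = 0 := by
    have h8 : ‖(u - P u) - (u - v)‖ ≤ 0 := by
      nlinarith [norm_nonneg ((u - P u) - (u - v))]
    exact norm_le_zero_iff.mp h8
  have : v - P u = 0 := by rw [← h7]; abel
  exact (sub_eq_zero.mp this).symm


set_option maxHeartbeats 1000000 in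
theorem stmt13 (c : H) (r : ℝ) (hr : 0 < r) (xb : H) (hx : ‖xb - c‖ = r)
    (P : H → H) (hP : IsMetricProj (closedBall c r) P) (y : H) :
    coderivSet P xb y =
      {z : H | ⟪y, xb - c⟫ ≤ ⟪z, xb - c⟫ ∧ ⟪z, xb - c⟫ ≤ 0 ∧
        y - z = (⟪y - z, xb - c⟫ / ‖xb - c‖ ^ 2) • (xb - c)} := by
  have hC : Convex ℝ (closedBall c r) := convex_closedBall c r
  have hxb_mem : xb ∈ closedBall c r := by
    simp [mem_closedBall, dist_eq_norm, hx]
  have hPid : ∀ u ∈ closedBall c r, P u = u := by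
    intro u hu
    have h := (hP u).2 u hu
    rw [sub_self, norm_zero] at h
    have h2 := norm_le_zero_iff.mp h
    rw [sub_eq_zero] at h2
    exact h2.symm
  have hPxb : P xb = xb := hPid xb hxb_mem
  have hball_inner : ∀ w ∈ closedBall c r, ⟪xb - c, w - xb⟫ ≤ 0 := by
    intro w hw
    have hwc : ‖w - c‖ ≤ r := by rwa [mem_closedBall, dist_eq_norm] at hw
    have h1 : ⟪xb - c, w - c⟫ ≤ r * r := by
      calc ⟪xb - c, w - c⟫ ≤ ‖xb - c‖ * ‖w - c‖ := real_inner_le_norm _ _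
        _ ≤ r * r := by rw [hx]; exact mul_le_mul_of_nonneg_left hwc hr.le
    have h2 : ⟪xb - c, w - xb⟫ = ⟪xb - c, w - c⟫ - ⟪xb - c, xb - c⟫ := by
      rw [← inner_sub_right]; congr 1; abel
    have h3 : ⟪xb - c, xb - c⟫ = r * r := by
      rw [real_inner_self_eq_norm_mul_norm, hx]
    linarith
  have hPout : ∀ t : ℝ, 0 < t → P (xb + t • (xb - c)) = xb := by
    intro t ht
    apply proj_unique' hC hP _ _ hxb_mem
    intro w hw
    have key : ‖xb + t • (xb - c) - xb‖^2 ≤ ‖xb + t • (xb - c) - w‖^2 := by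
      have e1 : xb + t • (xb - c) - w = t • (xb - c) + (xb - w) := by abel
      have e2 : xb + t • (xb - c) - xb = t • (xb - c) := by abel
      rw [e1, e2, norm_add_sq_real]
      have h4 : ⟪t • (xb - c), xb - w⟫ = t * (-⟪xb - c, w - xb⟫) := by
        rw [real_inner_smul_left, ← inner_neg_right]; congr 2; abel
      have h5 := hball_inner w hw
      nlinarith [norm_nonneg (xb - w), mul_nonneg ht.le (neg_nonneg.mpr h5)]
    nlinarith [norm_nonneg (xb + t • (xb - c) - xb), norm_nonneg (xb + t • (xb - c) - w)]
  have hPform : ∀ u : H, r < ‖u - c‖ → P u = c + (r / ‖u - c‖) • (u - c) := by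
    intro u hu
    have hs : 0 < ‖u - c‖ := hr.trans hu
    apply proj_unique' hC hP
    · rw [mem_closedBall, dist_eq_norm]
      have : c + (r / ‖u - c‖) • (u - c) - c = (r / ‖u - c‖) • (u - c) := by abel
      rw [this, norm_smul, Real.norm_eq_abs, abs_of_pos (by positivity)]
      rw [div_mul_cancel₀ _ hs.ne']
    · intro w hw
      have hwc : ‖w - c‖ ≤ r := by rwa [mem_closedBall, dist_eq_norm] at hw
      have e1 : u - (c + (r / ‖u - c‖) • (u - c)) = (1 - r / ‖u - c‖) • (u - c) := by
        rw [sub_smul, one_smul]; abel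
      have e2 : ‖u - (c + (r / ‖u - c‖) • (u - c))‖ = ‖u - c‖ - r := by
        rw [e1, norm_smul, Real.norm_eq_abs, abs_of_pos]
        · field_simp
        · rw [sub_pos, div_lt_one hs]; exact hu
      rw [e2]
      have h3 : ‖u - c‖ ≤ ‖u - w‖ + ‖w - c‖ := by
        calc ‖u - c‖ = ‖(u - w) + (w - c)‖ := by congr 1; abel
          _ ≤ ‖u - w‖ + ‖w - c‖ := norm_add_le _ _
      linarith
  ext z
  simp only [Set.mem_setOf_eq]
  constructor
  · intro hz
    have hane : xb - c ≠ 0 := by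
      intro h; rw [h, norm_zero] at hx; linarith
    -- Part 1 : ⟪z, xb - c⟫ ≤ 0
    have h1 : ⟪z, xb - c⟫ ≤ 0 := by
      by_contra hcon
      push_neg at hcon
      obtain ⟨δ, hδ, hδ'⟩ := hz (⟪z, xb - c⟫ / r) (by positivity)
      set t : ℝ := δ / (2 * r) with ht_def
      have ht : 0 < t := by positivity
      set u : H := xb + t • (xb - c) with hu_def
      have hune : u ≠ xb := by
        simp only [hu_def, ne_eq, add_eq_left]
        exact smul_ne_zero ht.ne' hane
      have huxb : u - xb = t • (xb - c) := by rw [hu_def]; abel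
      have hnorm : ‖u - xb‖ = t * r := by
        rw [huxb, norm_smul, Real.norm_eq_abs, abs_of_pos ht, hx]
      have hlt : ‖u - xb‖ < δ := by
        rw [hnorm, ht_def]; rw [div_mul_eq_mul_div, mul_comm]
        rw [div_lt_iff₀ (by positivity)]; nlinarith
      have hnorm2 : ‖t • (xb - c)‖ = t * r := by rw [← huxb, hnorm]
      have := hδ' u hune hlt
      rw [hPout t ht, hPxb, sub_self, inner_zero_right, sub_zero, huxb,
        real_inner_smul_right, hnorm2] at this
      rw [mul_div_mul_left _ _ ht.ne'] at this
      exact lt_irrefl _ this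
    -- Part 2 : normal cone property
    have hNorm : ∀ w ∈ closedBall c r, ⟪z - y, w - xb⟫ ≤ 0 := by
      intro w hw
      by_contra hcon
      push_neg at hcon
      have hwne : w ≠ xb := by
        intro h; rw [h, sub_self, inner_zero_right] at hcon; exact lt_irrefl _ hcon
      have hwpos : 0 < ‖w - xb‖ := by
        rw [norm_pos_iff, sub_ne_zero]; exact hwne
      obtain ⟨δ, hδ, hδ'⟩ := hz (⟪z - y, w - xb⟫ / ‖w - xb‖) (by positivity)
      set t : ℝ := min (1/2) (δ / (2 * ‖w - xb‖)) with ht_def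
      have ht : 0 < t := by positivity
      have ht1 : t ≤ 1 := le_trans (min_le_left _ _) (by norm_num)
      set u : H := xb + t • (w - xb) with hu_def
      have hune : u ≠ xb := by
        simp only [hu_def, ne_eq, add_eq_left]
        exact smul_ne_zero ht.ne' (sub_ne_zero.mpr hwne)
      have huxb : u - xb = t • (w - xb) := by rw [hu_def]; abel
      have hnorm : ‖u - xb‖ = t * ‖w - xb‖ := by
        rw [huxb, norm_smul, Real.norm_eq_abs, abs_of_pos ht]
      have hlt : ‖u - xb‖ < δ := by
        rw [hnorm]
        calc t * ‖w - xb‖ ≤ (δ / (2 * ‖w - xb‖)) * ‖w - xb‖ := by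
              apply mul_le_mul_of_nonneg_right (min_le_right _ _) hwpos.le
          _ = δ / 2 := by field_simp
          _ < δ := by linarith
      have humem : u ∈ closedBall c r := by
        have : u = (1 - t) • xb + t • w := by rw [hu_def]; module
        rw [this]
        exact (convex_closedBall c r) hxb_mem hw (by linarith) ht.le (by ring)
      have hnorm2 : ‖t • (w - xb)‖ = t * ‖w - xb‖ := by rw [← huxb, hnorm]
      have := hδ' u hune hlt
      rw [hPid u humem, hPxb, huxb, real_inner_smul_right, real_inner_smul_right,
        hnorm2, ← mul_sub, ← inner_sub_left, mul_div_mul_left _ _ ht.ne'] at this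
      exact lt_irrefl _ this
    -- Part 3 : structure of z - y
    have hva : 0 ≤ ⟪z - y, xb - c⟫ := by
      have hc_mem : c ∈ closedBall c r := mem_closedBall_self hr.le
      have := hNorm c hc_mem
      rw [show c - xb = -(xb - c) by abel, inner_neg_right] at this
      linarith
    have hr2 : ⟪xb - c, xb - c⟫ = r^2 := by
      rw [real_inner_self_eq_norm_mul_norm, hx]; ring
    have hkey : z - y = (⟪z - y, xb - c⟫ / r^2) • (xb - c) := by
      by_contra hne
      set v := z - y with hv_def
      set v' := v - (⟪v, xb - c⟫ / r^2) • (xb - c) with hv'_def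
      have hv'ne : v' ≠ 0 := by
        intro h; rw [hv'_def, sub_eq_zero] at h; exact hne h
      have hov : ⟪xb - c, v'⟫ = 0 := by
        rw [hv'_def, inner_sub_right, real_inner_smul_right, hr2,
          div_mul_cancel₀ _ (by positivity : (r:ℝ)^2 ≠ 0), real_inner_comm, sub_self]
      have hvv' : ⟪v, v'⟫ = ‖v'‖^2 := by
        have : v = v' + (⟪v, xb - c⟫ / r^2) • (xb - c) := by rw [hv'_def]; abel
        rw [this, inner_add_left, real_inner_smul_left, hov, real_inner_self_eq_norm_sq]
        ring
      have hm : 0 < ‖v'‖^2 := pow_pos (norm_pos_iff.mpr hv'ne) 2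
      set α := ⟪v, xb - c⟫ with hα_def
      set s : ℝ := min (r / ‖v'‖) (r^2 / (α + 1)) with hs_def
      have hα1 : 0 < α + 1 := by linarith [hva]
      have hv'pos : 0 < ‖v'‖ := norm_pos_iff.mpr hv'ne
      have hs : 0 < s := lt_min (div_pos hr hv'pos) (div_pos (by positivity) hα1)
      set N : ℝ := ‖(xb - c) + s • v'‖ with hN_def
      have hN2 : N^2 = r^2 + s^2 * ‖v'‖^2 := by
        rw [hN_def, norm_add_sq_real, real_inner_smul_right, hov, norm_smul,
          Real.norm_eq_abs, abs_of_pos hs, hx, mul_pow]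
        ring
      have hNr : r ≤ N := by nlinarith [norm_nonneg ((xb - c) + s • v'), sq_nonneg s, hm]
      have hN0 : 0 < N := lt_of_lt_of_le hr hNr
      set w : H := c + (r / N) • ((xb - c) + s • v') with hw_def
      have hw_mem : w ∈ closedBall c r := by
        rw [mem_closedBall, dist_eq_norm]
        have : w - c = (r / N) • ((xb - c) + s • v') := by rw [hw_def]; abel
        rw [this, norm_smul, Real.norm_eq_abs, abs_of_pos (by positivity), ← hN_def]
        rw [div_mul_cancel₀ _ hN0.ne']
      have hcontra := hNorm w hw_mem
      have hwxb : w - xb = (r / N) • ((xb - c) + s • v') - (xb - c) := by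
        rw [hw_def]; abel
      have hval : ⟪v, w - xb⟫ = (r / N) * (α + s * ‖v'‖^2) - α := by
        rw [hwxb, inner_sub_right, real_inner_smul_right, inner_add_right,
          real_inner_smul_right, hvv', ← hα_def]
      have hsα : s * α < r^2 := by
        have h1 : s ≤ r^2 / (α + 1) := min_le_right _ _
        have h2 : s * (α + 1) ≤ r^2 := by
          rw [← le_div_iff₀ hα1] at *; exact h1
        nlinarith
      have hpos : 0 < ⟪v, w - xb⟫ := by
        rw [hval]
        rw [sub_pos, div_mul_eq_mul_div, lt_div_iff₀ hN0]
        -- goal : α * N < r * (α + s * ‖v'‖^2)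
        nlinarith [hN2, hNr, mul_nonneg hva (sub_nonneg.mpr hNr), hm, hs, hva,
          mul_pos hs hm, mul_pos (mul_pos hs hs) hm]
      rw [hv_def] at hpos
      linarith
    refine ⟨?_, h1, ?_⟩
    · have : ⟪z - y, xb - c⟫ = ⟪z, xb - c⟫ - ⟪y, xb - c⟫ := inner_sub_left _ _ _
      linarith
    · have hx2 : ‖xb - c‖^2 = r^2 := by rw [hx]
      have eyz : y - z = -(z - y) := by abel
      have e2 : ⟪y - z, xb - c⟫ = -⟪z - y, xb - c⟫ := by
        rw [eyz, inner_neg_left]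
      calc y - z = -(z - y) := eyz
        _ = -((⟪z - y, xb - c⟫ / r^2) • (xb - c)) := congrArg Neg.neg hkey
        _ = (⟪y - z, xb - c⟫ / ‖xb - c‖^2) • (xb - c) := by
            rw [e2, hx2, neg_div, neg_smul]

  · rintro ⟨h1, h2, h3⟩
    intro ε hε
    have hx2 : ‖xb - c‖^2 = r^2 := by rw [hx]
    set μ : ℝ := ⟪y - z, xb - c⟫ / r^2 with hμ_def
    have h3' : y - z = μ • (xb - c) := by rw [hμ_def, ← hx2]; exact h3
    have hμ : μ ≤ 0 := by
      apply div_nonpos_of_nonpos_of_nonneg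
      · rw [inner_sub_left]; linarith
      · positivity
    have hy : y = z + μ • (xb - c) := by
      rw [← h3']; abel
    refine ⟨r * ε / (‖z‖ + 1), by positivity, ?_⟩
    intro u hne hu
    have hnu : 0 < ‖u - xb‖ := by
      rw [norm_pos_iff, sub_ne_zero]; exact hne
    rcases le_or_gt ‖u - c‖ r with hin | hout
    · -- inside the ball
      have humem : u ∈ closedBall c r := by rwa [mem_closedBall, dist_eq_norm]
      rw [hPid u humem, hPxb]
      have e1 : ⟪z, u - xb⟫ - ⟪y, u - xb⟫ = -(μ * ⟪xb - c, u - xb⟫) := by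
        rw [← inner_sub_left, show z - y = -(y - z) by abel, inner_neg_left, h3',
          real_inner_smul_left]
      have e2 : ⟪z, u - xb⟫ - ⟪y, u - xb⟫ ≤ 0 := by
        rw [e1]
        have := hball_inner u humem
        nlinarith
      calc (⟪z, u - xb⟫ - ⟪y, u - xb⟫) / ‖u - xb‖ ≤ 0 :=
            div_nonpos_of_nonpos_of_nonneg e2 (norm_nonneg _)
        _ < ε := hε
    · -- outside the ball
      have hs : 0 < ‖u - c‖ := hr.trans hout
      rw [hPform u hout, hPxb]
      set a : H := xb - c with ha_def
      set b : H := u - c with hb_def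
      set s : ℝ := ‖u - c‖ with hs_def
      set q : ℝ := r / s with hq_def
      have hq0 : 0 < q := by positivity
      have hq1 : q < 1 := by rw [hq_def, div_lt_one hs]; exact hout
      have hqs : q * s = r := by rw [hq_def]; field_simp
      have euxb : u - xb = b - a := by rw [hb_def, ha_def]; abel
      have ePuxb : c + q • b - xb = q • b - a := by rw [ha_def]; abel
      have hy_b : ⟪y, b⟫ = ⟪z, b⟫ + μ * ⟪a, b⟫ := by
        rw [hy, inner_add_left, real_inner_smul_left]
      have hy_a : ⟪y, a⟫ = ⟪z, a⟫ + μ * r^2 := by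
        rw [hy, inner_add_left, real_inner_smul_left, real_inner_self_eq_norm_sq, hx2]
      have eQ : ⟪z, b - a⟫ - ⟪y, q • b - a⟫
          = (1 - q) * ⟪z, a⟫ + (1 - q) * ⟪z, b - a⟫ - q * μ * ⟪a, b⟫ + μ * r^2 := by
        simp only [inner_sub_right, real_inner_smul_right]
        rw [hy_b, hy_a]
        ring
      have f3 : ⟪z, b - a⟫ ≤ ‖z‖ * ‖b - a‖ := real_inner_le_norm _ _
      have f4 : ⟪a, b⟫ ≤ r * s := by
        calc ⟪a, b⟫ ≤ ‖a‖ * ‖b‖ := real_inner_le_norm _ _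
          _ = r * s := by rw [ha_def, hx]
      have f5 : s - r ≤ ‖b - a‖ := by
        have := norm_sub_norm_le b a
        rw [ha_def, hx] at this
        exact this
      have g3 : (1 - q) * r ≤ ‖b - a‖ := by
        have g1 : (1 - q) * r * s = r * (s - r) := by
          have : q * s = r := hqs
          nlinarith [this]
        nlinarith [f5, hs, hr, hout, norm_nonneg (b - a)]
      have g4 : (1 - q) * ⟪z, b - a⟫ * r ≤ ‖z‖ * ‖b - a‖^2 := by
        rcases le_or_gt ⟪z, b - a⟫ 0 with hzb | hzb
        · have l1 : (1 - q) * ⟪z, b - a⟫ * r ≤ 0 := by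
            apply mul_nonpos_of_nonpos_of_nonneg _ hr.le
            exact mul_nonpos_of_nonneg_of_nonpos (by linarith) hzb
          have l2 : (0:ℝ) ≤ ‖z‖ * ‖b - a‖^2 := by positivity
          linarith
        · calc (1 - q) * ⟪z, b - a⟫ * r = ((1 - q) * r) * ⟪z, b - a⟫ := by ring
            _ ≤ ‖b - a‖ * ⟪z, b - a⟫ := mul_le_mul_of_nonneg_right g3 hzb.le
            _ ≤ ‖b - a‖ * (‖z‖ * ‖b - a‖) := mul_le_mul_of_nonneg_left f3 (norm_nonneg _)
            _ = ‖z‖ * ‖b - a‖^2 := by ring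
      have g5 : μ * r^2 - q * μ * ⟪a, b⟫ ≤ 0 := by
        have l1 : 0 ≤ r^2 - q * ⟪a, b⟫ := by nlinarith [f4, hq0, hqs]
        nlinarith [mul_nonpos_of_nonpos_of_nonneg hμ l1]
      have g6 : (1 - q) * ⟪z, a⟫ ≤ 0 :=
        mul_nonpos_of_nonneg_of_nonpos (by linarith) h2
      have key : (⟪z, b - a⟫ - ⟪y, q • b - a⟫) * r ≤ ‖z‖ * ‖b - a‖^2 := by
        rw [eQ]
        nlinarith [g4, g5, g6, hr]
      rw [euxb, ePuxb, div_lt_iff₀ (by rw [← euxb]; exact hnu)]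
      have hu' : ‖b - a‖ * (‖z‖ + 1) < r * ε := by
        rw [← euxb]
        exact (lt_div_iff₀ (by positivity)).mp hu
      have hnba : 0 < ‖b - a‖ := by rw [← euxb]; exact hnu
      nlinarith [key, mul_lt_mul_of_pos_right hu' hnba, hnba, hr, norm_nonneg z,
        sq_nonneg (‖b - a‖)]
end

section
/- Let H be a real Hilbert space, c ∈ H, r > 0, and x̄ ∈ H with ‖x̄ − c‖ > r. Then for every y ∈ H, D̂*P_{B(c,r)}(x̄)(y) = { (r/‖x̄ − c‖)(y − (⟨x̄ − c, y⟩/‖x̄ − c‖²)(x̄ − c)) }. -/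
open RealInnerProductSpace Filter Metric

variable {H : Type*} [NormedAddCommGroup H] [InnerProductSpace ℝ H] [CompleteSpace H]

/-! Near a point `xb` outside the ball, the projection is the smooth map
`u ↦ c + (r / ‖u - c‖) • (u - c)`. Whenever the scalarization `⟪y, f ·⟫` is Fréchet
differentiable at `x` with gradient `z₀`, the quotient defining `D̂* f (x) (y)` at `z` equals
`⟪z - z₀, u - x⟫ / ‖u - x‖ + o(1)`, whose limsup is `‖z - z₀‖` (attained along the ray
`x + t • (z - z₀)`); hence the coderivative is `{z₀}`, and `z₀` is computed by differentiating
the formula. -/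

section
variable {E : Type*} [NormedAddCommGroup E] [InnerProductSpace ℝ E]

theorem IsMetricProj.closedBall_apply_of_lt {P : E → E} {c u : E} {r : ℝ} (hr : 0 ≤ r)
    (hP : IsMetricProj (closedBall c r) P) (hu : r < ‖u - c‖) :
    P u = c + (r / ‖u - c‖) • (u - c) := by
  set d := ‖u - c‖ with hd_def
  have hd : 0 < d := hr.trans_lt hu
  obtain ⟨hPu, hPmin⟩ := hP u
  have hdist_cu : dist c u = d := by rw [dist_comm, dist_eq_norm]
  have hq : c + (r / d) • (u - c) ∈ closedBall c r := by
    rw [mem_closedBall, dist_eq_norm, add_sub_cancel_left, norm_smul, Real.norm_of_nonneg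
      (by positivity), div_mul_cancel₀ _ hd.ne']
  have hfar : ‖u - P u‖ ≤ d - r := by
    refine (hPmin _ hq).trans_eq ?_
    rw [show u - (c + (r / d) • (u - c)) = (1 - r / d) • (u - c) by module, norm_smul,
      Real.norm_of_nonneg (by rw [sub_nonneg, div_le_one hd]; exact hu.le), ← hd_def, sub_mul,
      one_mul, div_mul_cancel₀ _ hd.ne']
  have htri : d ≤ dist c (P u) + ‖u - P u‖ := by
    rw [← hdist_cu, ← dist_eq_norm_sub' (P u)]; exact dist_triangle _ _ _
  have hnear : dist c (P u) ≤ r := by rw [dist_comm]; exact hPu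
  -- equality in the triangle inequality for `c, P u, u` pins `P u` down in a strictly convex space
  have hcP : dist c (P u) = r / d * dist c u := by
    rw [hdist_cu, div_mul_cancel₀ _ hd.ne']; linarith
  have hPu' : dist (P u) u = (1 - r / d) * dist c u := by
    rw [hdist_cu, sub_mul, one_mul, div_mul_cancel₀ _ hd.ne', dist_eq_norm_sub']; linarith
  rw [eq_lineMap_of_dist_eq_mul_of_dist_eq_mul hcP hPu', AffineMap.lineMap_apply,
    vsub_eq_sub, vadd_eq_add, add_comm]

def ZeroMemFrechetSuperdiff (g : E → ℝ) (x : E) : Prop :=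
  ∀ ε > (0 : ℝ), ∃ δ > (0 : ℝ), ∀ u, u ≠ x → ‖u - x‖ < δ → (g u - g x) / ‖u - x‖ < ε

theorem HasFDerivAt.zeroMemFrechetSuperdiff_iff {g : E → ℝ} {w x : E}
    (hg : HasFDerivAt g (innerSL ℝ w) x) : ZeroMemFrechetSuperdiff g x ↔ w = 0 := by
  constructor
  · -- along the ray `x + t • w` the difference quotient tends to `‖w‖`
    intro h
    by_contra hw
    have hw' : 0 < ‖w‖ := norm_pos_iff.2 hw
    obtain ⟨δ, hδ, hδg⟩ := h (‖w‖ / 2) (by positivity)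
    have hline : HasDerivAt (fun t : ℝ => g (x + t • w)) (‖w‖ ^ 2) 0 := by
      have hg0 : HasFDerivAt g (innerSL ℝ w) (x + (0 : ℝ) • w) := by rwa [zero_smul, add_zero]
      have := hg0.comp_hasDerivAt (0 : ℝ) (((hasDerivAt_id' 0).smul_const w).const_add x)
      simp only [one_smul, coe_innerSL_apply, real_inner_self_eq_norm_sq] at this
      exact this
    have hslope := hline.tendsto_slope_zero_right
    simp only [zero_add, zero_smul, add_zero, smul_eq_mul] at hslope
    obtain ⟨t, hslope_t, ht, htδ⟩ := ((hslope.eventually (lt_mem_nhds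
      (show ‖w‖ ^ 2 / 2 < ‖w‖ ^ 2 by linarith [pow_pos hw' 2]))).and
      (eventually_mem_nhdsWithin.and
        (nhdsWithin_le_nhds (gt_mem_nhds (show (0:ℝ) < δ / ‖w‖ by positivity))))).exists
    have ht : (0 : ℝ) < t := ht
    have hnorm : ‖x + t • w - x‖ = t * ‖w‖ := by
      rw [add_sub_cancel_left, norm_smul, Real.norm_of_nonneg ht.le]
    have hquot := hδg (x + t • w) (by simpa using smul_ne_zero ht.ne' hw)
      (by rw [hnorm]; exact (lt_div_iff₀ hw').1 htδ)
    rw [hnorm, div_lt_iff₀ (by positivity)] at hquot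
    rw [lt_inv_mul_iff₀ ht] at hslope_t
    nlinarith
  · rintro rfl ε hε
    have ho := hg.isLittleO.def (half_pos hε)
    obtain ⟨δ, hδ, hδg⟩ := Metric.eventually_nhds_iff.1 ho
    refine ⟨δ, hδ, fun u hu hux => ?_⟩
    have hpos : 0 < ‖u - x‖ := norm_pos_iff.2 (sub_ne_zero.2 hu)
    have hsmall := hδg (by rwa [dist_eq_norm])
    simp only [map_zero, zero_apply, sub_zero, Real.norm_eq_abs] at hsmall
    rw [div_lt_iff₀ hpos]
    nlinarith [le_abs_self (g u - g x)]

theorem coderivSet_eq_singleton_of_hasFDerivAt_inner {f : E → E} {x y z₀ : E}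
    (hf : HasFDerivAt (fun u => ⟪y, f u⟫) (innerSL ℝ z₀) x) : coderivSet f x y = {z₀} := by
  ext z
  have hg : HasFDerivAt (fun u => ⟪z, u - x⟫ - ⟪y, f u - f x⟫) (innerSL ℝ (z - z₀)) x := by
    have hz := ((innerSL ℝ z).hasFDerivAt (x := x)).sub_const ⟪z, x⟫
    have := hz.sub (hf.sub_const ⟪y, f x⟫)
    simp only [coe_innerSL_apply, ← inner_sub_right, ← map_sub] at this
    exact this
  rw [Set.mem_singleton_iff, ← sub_eq_zero, ← hg.zeroMemFrechetSuperdiff_iff]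
  simp only [coderivSet, ZeroMemFrechetSuperdiff, sub_self, inner_zero_right, sub_zero,
    Set.mem_ofPred_eq]

theorem hasFDerivAt_inner_radialScaling (y c x : E) (r : ℝ) (hx : x ≠ c) :
    HasFDerivAt (fun u => ⟪y, c + (r / ‖u - c‖) • (u - c)⟫)
      (innerSL ℝ ((r / ‖x - c‖) • (y - (⟪x - c, y⟫ / ‖x - c‖ ^ 2) • (x - c)))) x := by
  have hv : ‖x - c‖ ≠ 0 := norm_ne_zero_iff.2 (sub_ne_zero.2 hx)
  have hsub := (hasFDerivAt_id (𝕜 := ℝ) x).sub_const c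
  have hnorm := hsub.norm_sq.sqrt (by simpa using hv)
  simp only [id_eq, Real.sqrt_sq_eq_abs, abs_norm] at hnorm
  have hscale := ((hasDerivAt_inv hv).comp_hasFDerivAt x hnorm).const_mul r
  have := (hasFDerivAt_const y x).inner ℝ ((hscale.smul hsub).const_add c)
  refine (this.congr_fderiv ?_).congr_of_eventuallyEq (.of_forall fun u => ?_)
  · ext h
    simp only [Function.comp_apply, id_eq, Pi.smul_apply', one_div, mul_inv_rev, map_sub,
      ContinuousLinearMap.comp_id, neg_smul, smul_neg, ContinuousLinearMap.comp_apply,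
      ContinuousLinearMap.prod_apply, zero_apply, add_apply, smul_apply,
      ContinuousLinearMap.id_apply, ContinuousLinearMap.smulRight_apply, neg_apply, sub_apply,
      coe_innerSL_apply, nsmul_eq_mul, Nat.cast_ofNat, smul_eq_mul, fderivInnerCLM_apply,
      inner_add_right, inner_smul_right, inner_neg_right, inner_sub_right, inner_zero_left,
      sub_self, mul_zero, add_zero, inner_sub_left, map_smul]
    rw [real_inner_comm y x, real_inner_comm y c]
    field_simp
    ring
  · simp [div_eq_mul_inv]

end

theorem stmt14 (c : H) (r : ℝ) (hr : 0 < r) (xb : H) (hx : r < ‖xb - c‖)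
    (P : H → H) (hP : IsMetricProj (closedBall c r) P) (y : H) :
    coderivSet P xb y =
      {(r / ‖xb - c‖) • (y - (⟪xb - c, y⟫ / ‖xb - c‖ ^ 2) • (xb - c))} := by
  have hxc : xb ≠ c := sub_ne_zero.1 (norm_pos_iff.1 (hr.trans hx))
  have hout : ∀ᶠ u in nhds xb, r < ‖u - c‖ :=
    (continuous_id.sub continuous_const).norm.continuousAt.eventually_const_lt hx
  apply coderivSet_eq_singleton_of_hasFDerivAt_inner
  refine (hasFDerivAt_inner_radialScaling y c xb r hxc).congr_of_eventuallyEq ?_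
  filter_upwards [hout] with u hu
  rw [hP.closedBall_apply_of_lt hr.le hu]
end

section
/- Let H be a real Hilbert space, c ∈ H, r > 0, x̄ ∈ H with ‖x̄ − c‖ > r. Then for every y ∈ H, the graphical derivative of P_{B(c,r)} at x̄ satisfies DP_{B(c,r)}(x̄)(y) = { (r/‖x̄ − c‖)(y − (⟨x̄ − c, y⟩/‖x̄ − c‖²)(x̄ − c)) }. -/
/-!
Near a point outside the ball, the projection is the radial retraction
`z ↦ c + (r / ‖z - c‖) • (z - c)`: this point is nearest, and nearest points in a convex subset
of a strictly convex space are unique. The retraction is Fréchet differentiable off `c`, and for a map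
differentiable at `x̄` with derivative `A` the graphical derivative in direction `y` is `{A y}`:
along any tangent sequence of the graph the second components are difference quotients, which
converge to `A y`, and the sequence `tₙ = 1 / (n + 1)` realises this value.
-/

open RealInnerProductSpace Filter Metric

open Topology

section StrictConvex

variable {E : Type*} [NormedAddCommGroup E] [NormedSpace ℝ E] [StrictConvexSpace ℝ E]

theorem Convex.eq_of_forall_norm_sub_le {K : Set E} (hK : Convex ℝ K) {x p q : E}
    (hp : p ∈ K) (hq : q ∈ K) (hp_min : ∀ w ∈ K, ‖x - p‖ ≤ ‖x - w‖)
    (hq_min : ∀ w ∈ K, ‖x - q‖ ≤ ‖x - w‖) : p = q := by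
  set m : E := (1 / 2 : ℝ) • (p + q)
  have hm : m ∈ K := by
    simpa [m, smul_add] using hK hp hq (by norm_num : (0 : ℝ) ≤ 1 / 2)
      (by norm_num : (0 : ℝ) ≤ 1 / 2) (by norm_num)
  have hsub : x - m = (1 / 2 : ℝ) • ((x - p) + (x - q)) := by simp only [m]; module
  have hnorm : ‖x - p‖ = ‖x - q‖ := le_antisymm (hp_min q hq) (hq_min p hp)
  by_contra hne
  have hlt := (norm_midpoint_lt_iff hnorm).2 (fun h => hne (sub_right_injective h))
  rw [← hsub] at hlt
  exact (hp_min m hm).not_gt hlt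

end StrictConvex

section Ball

variable {H : Type*} [NormedAddCommGroup H] [InnerProductSpace ℝ H]

theorem IsMetricProj.apply_eq_of_lt_norm_sub {c : H} {r : ℝ} {P : H → H}
    (hP : IsMetricProj (closedBall c r) P) {x : H} (hx : r < ‖x - c‖) :
    P x = c + (r / ‖x - c‖) • (x - c) := by
  have hr : 0 ≤ r := dist_nonneg.trans (hP x).1
  have hR : 0 < ‖x - c‖ := hr.trans_lt hx
  set q := c + (r / ‖x - c‖) • (x - c)
  have hq : q ∈ closedBall c r := by
    rw [mem_closedBall, dist_eq_norm, add_sub_cancel_left, norm_smul, Real.norm_eq_abs,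
      abs_div, abs_of_nonneg hr, abs_norm, div_mul_cancel₀ _ hR.ne']
  have hxq : ‖x - q‖ = ‖x - c‖ - r := by
    have : x - q = (1 - r / ‖x - c‖) • (x - c) := by simp only [q]; module
    have hcoef : 0 ≤ 1 - r / ‖x - c‖ := by rw [sub_nonneg, div_le_one hR]; exact hx.le
    rw [this, norm_smul, Real.norm_eq_abs, abs_of_nonneg hcoef]
    field_simp
  have hq_min : ∀ w ∈ closedBall c r, ‖x - q‖ ≤ ‖x - w‖ := by
    intro w hw
    rw [mem_closedBall, dist_eq_norm] at hw
    have := norm_sub_norm_le (x - c) (w - c)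
    rw [sub_sub_sub_cancel_right] at this
    linarith
  exact (convex_closedBall c r).eq_of_forall_norm_sub_le (hP x).1 hq (hP x).2 hq_min

theorem hasFDerivAt_radial_scaling (c : H) (r : ℝ) {x : H} (hx : x ≠ c) :
    HasFDerivAt (fun z => c + (r / ‖z - c‖) • (z - c))
      ((r / ‖x - c‖) • (ContinuousLinearMap.id ℝ H -
        (‖x - c‖ ^ 2)⁻¹ • (innerSL ℝ (x - c)).smulRight (x - c))) x := by
  have hR : ‖x - c‖ ≠ 0 := norm_ne_zero_iff.2 (sub_ne_zero.2 hx)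
  have h_sub : HasFDerivAt (fun z : H => z - c) (ContinuousLinearMap.id ℝ H) x :=
    (hasFDerivAt_id x).sub_const c
  have h_norm :
      HasFDerivAt (fun z : H => ‖z - c‖) (‖x - c‖⁻¹ • innerSL ℝ (x - c)) x := by
    convert h_sub.norm_sq.sqrt (pow_ne_zero 2 hR) using 1
    · ext z; simp [Real.sqrt_sq (norm_nonneg _)]
    · ext y
      simp only [smul_apply, coe_innerSL_apply, smul_eq_mul, Real.sqrt_sq (norm_nonneg _),
        ContinuousLinearMap.comp_id, nsmul_eq_mul, Nat.cast_ofNat]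
      field_simp
  have h_inv := ((hasDerivAt_inv hR).comp_hasFDerivAt x h_norm).const_mul r
  have := (h_inv.smul h_sub).const_add c
  convert this using 1
  · ext z; simp [div_eq_mul_inv]
  · ext y
    simp only [sub_apply, smul_apply, add_apply, ContinuousLinearMap.id_apply,
      ContinuousLinearMap.smulRight_apply, coe_innerSL_apply, Function.comp_apply, smul_eq_mul,
      div_eq_mul_inv]
    match_scalars <;> field_simp

end Ball

section Graph

variable {E F : Type*} [NormedAddCommGroup E] [NormedSpace ℝ E]
  [NormedAddCommGroup F] [NormedSpace ℝ F]

def graphicalDeriv (f : E → F) (x y : E) : Set F :=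
  {w | (y, w) ∈ bouligandTangentCone {p : E × F | p.2 = f p.1} (x, f x)}

theorem HasFDerivAt.tendsto_inv_smul_sub {f : E → F} {A : E →L[ℝ] F} {x y : E}
    (hf : HasFDerivAt f A x) {t : ℕ → ℝ} {v : ℕ → E} (ht_pos : ∀ n, 0 < t n)
    (ht : Tendsto t atTop (𝓝 0)) (hv : Tendsto v atTop (𝓝 y)) :
    Tendsto (fun n => (t n)⁻¹ • (f (x + t n • v n) - f x)) atTop (𝓝 (A y)) := by
  refine hf.hasFDerivWithinAt.lim (s := Set.univ) (by simpa using ht.smul hv)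
    (Eventually.of_forall fun _ => Set.mem_univ _) (hv.congr fun n => ?_)
  rw [smul_smul, inv_mul_cancel₀ (ht_pos n).ne', one_smul]

theorem HasFDerivAt.graphicalDeriv_eq {f : E → F} {A : E →L[ℝ] F} {x : E}
    (hf : HasFDerivAt f A x) (y : E) : graphicalDeriv f x y = {A y} := by
  ext w
  constructor
  · rintro ⟨t, s, ht_pos, ht, hs, hgraph⟩
    have hs_snd : ∀ n, (s n).2 = (t n)⁻¹ • (f (x + t n • (s n).1) - f x) := fun n => by
      have hn : f x + t n • (s n).2 = f (x + t n • (s n).1) := hgraph n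
      rw [← hn, add_sub_cancel_left, smul_smul, inv_mul_cancel₀ (ht_pos n).ne', one_smul]
    exact tendsto_nhds_unique ((continuous_snd.tendsto _).comp hs)
      ((hf.tendsto_inv_smul_sub ht_pos ht ((continuous_fst.tendsto _).comp hs)).congr
        fun n => (hs_snd n).symm)
  · rintro rfl
    set t : ℕ → ℝ := fun n => 1 / (n + 1)
    have ht_pos : ∀ n, 0 < t n := fun n => by positivity
    refine ⟨t, fun n => (y, (t n)⁻¹ • (f (x + t n • y) - f x)), ht_pos,
      tendsto_one_div_add_atTop_nhds_zero_nat, tendsto_const_nhds.prodMk_nhds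
        (hf.tendsto_inv_smul_sub ht_pos tendsto_one_div_add_atTop_nhds_zero_nat
          tendsto_const_nhds), fun n => ?_⟩
    change f x + t n • (t n)⁻¹ • (f (x + t n • y) - f x) = f (x + t n • y)
    rw [smul_smul, mul_inv_cancel₀ (ht_pos n).ne', one_smul, add_sub_cancel]

end Graph

variable {H : Type*} [NormedAddCommGroup H] [InnerProductSpace ℝ H] [CompleteSpace H]

theorem stmt16_general (c : H) (r : ℝ) (xb : H) (hx : r < ‖xb - c‖)
    (P : H → H) (hP : IsMetricProj (closedBall c r) P) (y : H) :
    {w : H | (y, w) ∈ bouligandTangentCone {p : H × H | p.2 = P p.1} (xb, P xb)} =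
      {(r / ‖xb - c‖) • (y - (⟪xb - c, y⟫ / ‖xb - c‖ ^ 2) • (xb - c))} := by
  have hxc : xb ≠ c := by
    rintro rfl
    exact (dist_nonneg.trans (hP xb).1).not_gt (by simpa using hx)
  have hP_eq : P =ᶠ[𝓝 xb] fun z => c + (r / ‖z - c‖) • (z - c) :=
    (isOpen_lt continuous_const (continuous_id.sub continuous_const).norm |>.eventually_mem hx).mono
      fun z hz => hP.apply_eq_of_lt_norm_sub hz
  refine ((hasFDerivAt_radial_scaling c r hxc).congr_of_eventuallyEq hP_eq).graphicalDeriv_eq y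
    |>.trans ?_
  simp only [smul_apply, sub_apply, ContinuousLinearMap.id_apply,
    ContinuousLinearMap.smulRight_apply, coe_innerSL_apply, smul_smul, div_eq_inv_mul]

theorem stmt16 (c : H) (r : ℝ) (hr : 0 < r) (xb : H) (hx : r < ‖xb - c‖)
    (P : H → H) (hP : IsMetricProj (closedBall c r) P) (y : H) :
    {w : H | (y, w) ∈ bouligandTangentCone {p : H × H | p.2 = P p.1} (xb, P xb)} =
      {(r / ‖xb - c‖) • (y - (⟪xb - c, y⟫ / ‖xb - c‖ ^ 2) • (xb - c))} :=
  stmt16_general c r xb hx P hP y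
end

section
/- Let H be a real Hilbert space, c ∈ H, r > 0, and x̄ ∈ H with ‖x̄ − c‖ = r. Let y ∈ H be a direction with ⟨x̄ − c, y⟩ > 0 (so that ‖(x̄ + ty) − c‖ ≥ r for small t > 0). Then the graphical derivative of P_{B(c,r)} at x̄ satisfies DP_{B(c,r)}(x̄)(y) = { y − (1/r²)⟨x̄ − c, y⟩(x̄ − c) }. -/
/-!
Outside the open ball, the metric projection onto `closedBall c r` is the radial retraction
`z ↦ c + (r / ‖z - c‖) • (z - c)`, which is smooth away from `c`. For an outward direction `y`,
the points `xb + t • s` with `t ↓ 0` and `s → y` stay outside the open ball, so the difference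
quotients of `P` along them are those of the retraction; they converge to its Fréchet derivative
at `xb` applied to `y`, the orthogonal projection `y - r⁻² ⟪xb - c, y⟫ (xb - c)` of `y` onto the
tangent hyperplane of the sphere. A map whose difference quotients converge in this (Hadamard)
sense has a single-valued graphical derivative.
-/

open RealInnerProductSpace Filter Metric

open Topology

section GraphicalDerivative

variable {E F : Type*} [NormedAddCommGroup E] [NormedSpace ℝ E] [NormedAddCommGroup F]
  [NormedSpace ℝ F]

lemma add_smul_mem_graph_iff {f : E → F} {x : E} {t : ℝ} (ht : t ≠ 0) (v : E × F) :
    (x, f x) + t • v ∈ {p : E × F | p.2 = f p.1} ↔ v.2 = t⁻¹ • (f (x + t • v.1) - f x) := by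
  rw [Set.mem_ofPred_eq, Prod.snd_add, Prod.fst_add, Prod.smul_fst, Prod.smul_snd,
    eq_inv_smul_iff₀ ht, eq_sub_iff_add_eq', eq_comm]

theorem setOf_mem_bouligandTangentCone_graph_eq_singleton {f : E → F} {x y : E} {L : F}
    (hf : Tendsto (fun p : ℝ × E => p.1⁻¹ • (f (x + p.1 • p.2) - f x)) (𝓝[>] 0 ×ˢ 𝓝 y) (𝓝 L)) :
    {w | (y, w) ∈ bouligandTangentCone {p : E × F | p.2 = f p.1} (x, f x)} = {L} := by
  ext w
  constructor
  · rintro ⟨t, s, ht, ht0, hs, hmem⟩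
    have ht' : Tendsto t atTop (𝓝[>] 0) := tendsto_nhdsWithin_iff.2 ⟨ht0, .of_forall ht⟩
    have hquot := hf.comp (ht'.prodMk hs.fst_nhds)
    have hs₂ : ∀ n, (s n).2 = (t n)⁻¹ • (f (x + t n • (s n).1) - f x) := fun n =>
      (add_smul_mem_graph_iff (ht n).ne' (s n)).1 (hmem n)
    exact tendsto_nhds_unique hs.snd_nhds ((funext hs₂).symm ▸ hquot)
  · rintro rfl
    have ht : Tendsto (fun n : ℕ => 1 / ((n : ℝ) + 1)) atTop (𝓝[>] 0) :=
      tendsto_nhdsWithin_iff.2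
        ⟨tendsto_one_div_add_atTop_nhds_zero_nat,
          .of_forall fun _ => Set.mem_Ioi.2 Nat.one_div_pos_of_nat⟩
    refine ⟨_, fun n => (y, (1 / ((n : ℝ) + 1))⁻¹ • (f (x + (1 / ((n : ℝ) + 1)) • y) - f x)),
      fun n => by positivity, tendsto_nhds_of_tendsto_nhdsWithin ht,
      tendsto_const_nhds.prodMk_nhds (hf.comp (ht.prodMk tendsto_const_nhds)),
      fun n => (add_smul_mem_graph_iff (by positivity) _).2 rfl⟩

theorem HasFDerivAt.tendsto_inv_smul_sub_s17 {f : E → F} {f' : E →L[ℝ] F} {x : E}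
    (hf : HasFDerivAt f f' x) (y : E) :
    Tendsto (fun p : ℝ × E => p.1⁻¹ • (f (x + p.1 • p.2) - f x)) (𝓝[≠] 0 ×ˢ 𝓝 y)
      (𝓝 (f' y)) := by
  have hne : ∀ᶠ p : ℝ × E in 𝓝[≠] 0 ×ˢ 𝓝 y, p.1 ≠ 0 :=
    (eventually_mem_nhdsWithin (a := (0 : ℝ))).prod_inl _
  refine hf.hasFDerivWithinAt.lim (s := Set.univ) ?_ (.of_forall fun _ => Set.mem_univ _) ?_
  · have h : Tendsto (fun p : ℝ × E => p.1 • p.2) (𝓝 (0, y)) (𝓝 ((0 : ℝ) • y)) :=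
      continuous_smul.tendsto _
    rw [zero_smul, nhds_prod_eq] at h
    exact h.mono_left (prod_mono nhdsWithin_le_nhds le_rfl)
  · exact tendsto_snd.congr' (hne.mono fun p hp => (inv_smul_smul₀ hp p.2).symm)

end GraphicalDerivative

section RadialRetraction

variable {E : Type*} [NormedAddCommGroup E] [InnerProductSpace ℝ E]

noncomputable def radialRetraction (c : E) (r : ℝ) (z : E) : E := c + (r / ‖z - c‖) • (z - c)

theorem hasFDerivAt_radialRetraction {c x : E} (r : ℝ) (hx : x ≠ c) :
    HasFDerivAt (radialRetraction c r)
      ((r / ‖x - c‖) • (ContinuousLinearMap.id ℝ E -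
        (‖x - c‖ ^ 2)⁻¹ • (innerSL ℝ (x - c)).smulRight (x - c))) x := by
  have hρ : 0 < ‖x - c‖ := norm_pos_iff.2 (sub_ne_zero.2 hx)
  have hsq : HasFDerivAt (fun z => ‖z - c‖ ^ 2) (2 • innerSL ℝ (x - c)) x := by
    simpa using ((hasFDerivAt_id x).sub_const c).norm_sq
  have hsqrt : √(‖x - c‖ ^ 2) = ‖x - c‖ := Real.sqrt_sq hρ.le
  have hscalar := ((hasDerivAt_const (‖x - c‖ ^ 2) r).fun_div
    (Real.hasDerivAt_sqrt (pow_pos hρ 2).ne') (by rw [hsqrt]; exact hρ.ne')).comp_hasFDerivAt x hsq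
  have h := (hscalar.smul ((hasFDerivAt_id x).sub_const c)).const_add c
  simp only [Function.comp_def, Real.sqrt_sq (norm_nonneg _)] at h
  refine h.congr_fderiv ?_
  ext v
  simp only [add_apply, smul_apply, sub_apply, ContinuousLinearMap.id_apply,
    ContinuousLinearMap.smulRight_apply, coe_innerSL_apply, id_eq, nsmul_eq_mul, smul_eq_mul]
  match_scalars <;> field_simp <;> ring

lemma eventually_norm_le_norm_add_smul {a y : E} (hy : 0 < ⟪a, y⟫) :
    ∀ᶠ p : ℝ × E in 𝓝[>] 0 ×ˢ 𝓝 y, ‖a‖ ≤ ‖a + p.1 • p.2‖ := by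
  have ht : ∀ᶠ p : ℝ × E in 𝓝[>] 0 ×ˢ 𝓝 y, 0 < p.1 :=
    (eventually_mem_nhdsWithin (a := (0 : ℝ))).prod_inl _
  have hs : ∀ᶠ p : ℝ × E in 𝓝[>] 0 ×ˢ 𝓝 y, 0 < ⟪a, p.2⟫ :=
    (((continuous_const.inner continuous_id).tendsto y).eventually (eventually_gt_nhds hy)).prod_inr _
  filter_upwards [ht, hs] with p ht hs
  have h : ‖a‖ ^ 2 ≤ ‖a + p.1 • p.2‖ ^ 2 := by
    rw [norm_add_sq_real, real_inner_smul_right]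
    nlinarith [sq_nonneg ‖p.1 • p.2‖]
  exact (pow_le_pow_iff_left₀ (norm_nonneg _) (norm_nonneg _) two_ne_zero).1 h

end RadialRetraction

namespace IsMetricProj

variable {E : Type*} [NormedAddCommGroup E] [InnerProductSpace ℝ E] {C : Set E} {P : E → E}

lemma apply_eq_self_s17 (hP : IsMetricProj C P) {x : E} (hx : x ∈ C) : P x = x := by
  have h := (hP x).2 x hx
  rw [sub_self, norm_zero, norm_le_zero_iff, sub_eq_zero] at h
  exact h.symm

lemma closedBall_apply_of_lt_s17 {c x : E} {r : ℝ} (hP : IsMetricProj (closedBall c r) P)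
    (hx : r < ‖x - c‖) : P x = radialRetraction c r x := by
  set d := ‖x - c‖
  have hr : 0 ≤ r := nonempty_closedBall.1 ⟨_, (hP x).1⟩
  have hd : 0 < d := hr.trans_lt hx
  have hcx : dist c x = d := by rw [dist_comm, dist_eq_norm]
  have hPc : dist c (P x) ≤ r := by rw [dist_comm]; exact (hP x).1
  have hPx : dist (P x) x ≤ d - r := by
    have hq : c + (r / d) • (x - c) ∈ closedBall c r := by
      rw [mem_closedBall, dist_eq_norm, add_sub_cancel_left, norm_smul, Real.norm_of_nonneg
        (by positivity), div_mul_cancel₀ _ hd.ne']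
    have hxq : x - (c + (r / d) • (x - c)) = (1 - r / d) • (x - c) := by module
    have := (hP x).2 _ hq
    rwa [hxq, norm_smul, Real.norm_of_nonneg (by rw [sub_nonneg, div_le_one hd]; exact hx.le),
      sub_mul, one_mul, div_mul_cancel₀ _ hd.ne', ← dist_eq_norm'] at this
  -- equality in the triangle inequality `c, P x, x` puts `P x` on the segment `[c, x]`
  have htri := dist_triangle c (P x) x
  have h := eq_lineMap_of_dist_eq_mul_of_dist_eq_mul (x := c) (y := P x) (z := x) (r := r / d)
    (by rw [hcx, div_mul_cancel₀ _ hd.ne']; linarith)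
    (by rw [hcx, sub_mul, one_mul, div_mul_cancel₀ _ hd.ne']; linarith)
  rw [h, AffineMap.lineMap_apply_module', add_comm, radialRetraction]

lemma closedBall_apply_of_le {c x : E} {r : ℝ} (hP : IsMetricProj (closedBall c r) P)
    (hx : r ≤ ‖x - c‖) : P x = radialRetraction c r x := by
  rcases hx.lt_or_eq with hlt | heq
  · exact hP.closedBall_apply_of_lt_s17 hlt
  · rw [hP.apply_eq_self_s17 (by rw [mem_closedBall, dist_eq_norm, heq]), radialRetraction, ← heq]
    rcases eq_or_ne r 0 with rfl | hr
    · rw [eq_comm, norm_eq_zero, sub_eq_zero] at heq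
      simp [heq]
    · rw [div_self hr, one_smul, add_sub_cancel]

end IsMetricProj

variable {H : Type*} [NormedAddCommGroup H] [InnerProductSpace ℝ H] [CompleteSpace H]

theorem stmt17 (c : H) (r : ℝ) (hr : 0 < r) (xb : H) (hx : ‖xb - c‖ = r)
    (P : H → H) (hP : IsMetricProj (closedBall c r) P) (y : H)
    (hy : 0 < ⟪xb - c, y⟫) :
    {w : H | (y, w) ∈ bouligandTangentCone {p : H × H | p.2 = P p.1} (xb, P xb)} =
      {y - ((1 / r ^ 2) * ⟪xb - c, y⟫) • (xb - c)} := by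
  have hxc : xb ≠ c := by
    rintro rfl
    rw [sub_self, norm_zero] at hx
    exact hr.ne hx
  have hPxb : P xb = radialRetraction c r xb := hP.closedBall_apply_of_le hx.ge
  have hP_outward : ∀ᶠ p : ℝ × H in 𝓝[>] 0 ×ˢ 𝓝 y,
      radialRetraction c r (xb + p.1 • p.2) = P (xb + p.1 • p.2) := by
    filter_upwards [eventually_norm_le_norm_add_smul hy] with p hp
    exact (hP.closedBall_apply_of_le (by rwa [sub_add_eq_add_sub, hx] at hp)).symm
  have hquot := ((hasFDerivAt_radialRetraction r hxc).tendsto_inv_smul_sub_s17 y).mono_left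
    (prod_mono (nhdsGT_le_nhdsNE 0) le_rfl)
  rw [← hPxb] at hquot
  convert setOf_mem_bouligandTangentCone_graph_eq_singleton
    (hquot.congr' (hP_outward.mono fun p hp => by rw [hp])) using 2
  rw [hx, div_self hr.ne', one_smul]
  simp only [sub_apply, ContinuousLinearMap.id_apply, smul_apply,
    ContinuousLinearMap.smulRight_apply, innerSL_apply_apply, smul_smul, one_div]
end

section
/- Let H be a real Hilbert space, c ∈ H, r > 0, and x̄ ∈ H with ‖x̄ − c‖ = r. Let y ∈ H be a direction with ⟨x̄ − c, y⟩ < 0 (so that ‖(x̄ + ty) − c‖ < r for small t > 0). Then DP_{B(c,r)}(x̄)(y) = {y}. -/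
open RealInnerProductSpace Filter Metric

variable {H : Type*} [NormedAddCommGroup H] [InnerProductSpace ℝ H] [CompleteSpace H]

lemma proj_fixed {H : Type*} [NormedAddCommGroup H] [InnerProductSpace ℝ H]
    {C : Set H} {P : H → H} (hP : IsMetricProj C P) {u : H} (hu : u ∈ C) : P u = u := by
  have h := (hP u).2 u hu
  simp only [sub_self, norm_zero] at h
  exact (sub_eq_zero.mp (norm_le_zero_iff.mp h)).symm

lemma ball_mem_aux {H : Type*} [NormedAddCommGroup H] [InnerProductSpace ℝ H]
    (c : H) (r : ℝ) (xb : H) (hx : ‖xb - c‖ = r) (t : ℝ) (v : H)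
    (ht : 0 ≤ t) (h : 2 * ⟪xb - c, v⟫ + t * ‖v‖ ^ 2 ≤ 0) :
    xb + t • v ∈ closedBall c r := by
  have hr0 : 0 ≤ r := hx ▸ norm_nonneg _
  rw [mem_closedBall, dist_eq_norm]
  have key : ‖xb + t • v - c‖ ^ 2 ≤ r ^ 2 := by
    have : xb + t • v - c = (xb - c) + t • v := by abel
    rw [this, norm_add_sq_real, real_inner_smul_right, norm_smul, hx]
    have h2 : t * (2 * ⟪xb - c, v⟫ + t * ‖v‖ ^ 2) ≤ 0 :=
      mul_nonpos_of_nonneg_of_nonpos ht h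
    have habs : ‖t‖ = t := by rw [Real.norm_eq_abs, abs_of_nonneg ht]
    rw [habs]
    nlinarith
  nlinarith [norm_nonneg (xb + t • v - c)]

theorem stmt18 (c : H) (r : ℝ) (hr : 0 < r) (xb : H) (hx : ‖xb - c‖ = r)
    (P : H → H) (hP : IsMetricProj (closedBall c r) P) (y : H)
    (hy : ⟪xb - c, y⟫ < 0) :
    {w : H | (y, w) ∈ bouligandTangentCone {p : H × H | p.2 = P p.1} (xb, P xb)} =
      {y} := by

  have hxbC : xb ∈ closedBall c r := by
    rw [mem_closedBall, dist_eq_norm, hx]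
  have hPxb : P xb = xb := proj_fixed hP hxbC
  ext w
  simp only [Set.mem_setOf_eq, Set.mem_singleton_iff]
  constructor
  · rintro ⟨t, s, htpos, ht0, hs, hmem⟩
    have hs1 : Tendsto (fun n => (s n).1) atTop (nhds y) :=
      (continuous_fst.tendsto _).comp hs
    have hs2 : Tendsto (fun n => (s n).2) atTop (nhds w) :=
      (continuous_snd.tendsto _).comp hs
    have hg : Tendsto (fun n => 2 * ⟪xb - c, (s n).1⟫ + t n * ‖(s n).1‖ ^ 2)
        atTop (nhds (2 * ⟪xb - c, y⟫ + 0 * ‖y‖ ^ 2)) := by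
      apply Tendsto.add
      · exact (tendsto_const_nhds.inner hs1).const_mul 2
      · exact ht0.mul ((hs1.norm).pow 2)
    rw [zero_mul, add_zero] at hg
    have hneg : ∀ᶠ n in atTop, 2 * ⟪xb - c, (s n).1⟫ + t n * ‖(s n).1‖ ^ 2 ≤ 0 := by
      have := hg.eventually_lt_const (by linarith : 2 * ⟪xb - c, y⟫ < 0)
      filter_upwards [this] with n hn using le_of_lt hn
    have heq : ∀ᶠ n in atTop, (s n).2 = (s n).1 := by
      filter_upwards [hneg] with n hn
      have hball : xb + t n • (s n).1 ∈ closedBall c r :=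
        ball_mem_aux c r xb hx (t n) _ (htpos n).le hn
      have hfix : P (xb + t n • (s n).1) = xb + t n • (s n).1 := proj_fixed hP hball
      have h2 := hmem n
      simp only [Set.mem_setOf_eq, Prod.snd_add, Prod.fst_add, Prod.smul_snd,
        Prod.smul_fst, hPxb] at h2
      rw [hfix] at h2
      exact smul_right_injective H (htpos n).ne' (add_left_cancel h2)
    have : Tendsto (fun n => (s n).2) atTop (nhds y) :=
      Tendsto.congr' (by filter_upwards [heq] with n hn using hn.symm) hs1
    exact tendsto_nhds_unique hs2 this
  · intro hw
    subst hw
    set a : ℝ := -⟪xb - c, w⟫ with ha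
    have ha0 : 0 < a := by rw [ha]; linarith
    set t0 : ℝ := a / (‖w‖ ^ 2 + 1) with ht0def
    have ht00 : 0 < t0 := div_pos ha0 (by positivity)
    refine ⟨fun n => t0 / (n + 1), fun _ => (w, w), fun n => by positivity, ?_, ?_, ?_⟩
    · have : Tendsto (fun n : ℕ => 1 / ((n : ℝ) + 1)) atTop (nhds 0) :=
        tendsto_one_div_add_atTop_nhds_zero_nat
      have := this.const_mul t0
      simpa [div_eq_mul_inv, mul_comm] using this
    · exact tendsto_const_nhds
    · intro n
      simp only [Set.mem_setOf_eq, Prod.snd_add, Prod.fst_add, Prod.smul_snd,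
        Prod.smul_fst, hPxb]
      have htle : t0 / (n + 1) ≤ t0 := by
        apply div_le_self ht00.le
        push_cast; linarith
      have hball : xb + (t0 / (n + 1)) • w ∈ closedBall c r := by
        apply ball_mem_aux c r xb hx _ _ (by positivity)
        have h1 : t0 * ‖w‖ ^ 2 ≤ a := by
          rw [ht0def, div_mul_eq_mul_div, div_le_iff₀ (by positivity)]
          nlinarith [sq_nonneg (‖w‖), ha0.le]
        have h2 : (t0 / (n + 1)) * ‖w‖ ^ 2 ≤ t0 * ‖w‖ ^ 2 :=
          mul_le_mul_of_nonneg_right htle (by positivity)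
        have : ⟪xb - c, w⟫ = -a := by rw [ha]; ring
        rw [this]; linarith
      exact (proj_fixed hP hball).symm
end
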